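/- arXiv:2010.11243 — 5 statements merged into one kernel-verified Lean document; each statement's English description precedes it below -/
import Mathlib

section
/- Let G be a one-sided POSG and H the minimax operator. Then there exists a unique convex continuous function V† : Δ(S) → ℝ satisfying HV† = V†. Moreover, V† is δ-Lipschitz with respect to the ℓ1 metric, takes values in [L, U], and for every convex continuous V₀ : Δ(S) → ℝ with values in [L, U], the iterates V_{n+1} = H V_n (V_0 given) converge uniformly on Δ(S) to V†. -/
open scoped BigOperators

noncomputable section

/-- ℓ1 distance on `S → ℝ`. -/
def l1dist {S : Type*} [Fintype S] (p q : S → ℝ) : ℝ := ∑ s, |p s - q s|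

/-- Evaluation at a belief `b` of the linear function on the simplex with vertex values
`α : S → ℝ`. -/
def lineval {S : Type*} [Fintype S] (α : S → ℝ) (b : S → ℝ) : ℝ := ∑ s, b s * α s

/-- `f` is `k`-Lipschitz with respect to the ℓ1 metric on the probability simplex. -/
def LipOnSimplex {S : Type*} [Fintype S] (k : ℝ) (f : (S → ℝ) → ℝ) : Prop :=
  ∀ p ∈ stdSimplex ℝ S, ∀ q ∈ stdSimplex ℝ S, |f p - f q| ≤ k * l1dist p q

/-- A one-sided partially observable stochastic game. -/
structure OSPOSG (S A1 A2 O : Type*) [Fintype S] [Fintype A1] [Fintype A2] [Fintype O] where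
  /-- transition function: `T s a1 a2 o s'` is the probability of observing `o` and moving
  to `s'` from `s` under actions `a1, a2`. -/
  T : S → A1 → A2 → O → S → ℝ
  T_nonneg : ∀ s a1 a2 o s', 0 ≤ T s a1 a2 o s'
  T_sum : ∀ s a1 a2, ∑ o, ∑ s', T s a1 a2 o s' = 1
  /-- reward function of player 1 -/
  R : S → A1 → A2 → ℝ
  /-- discount factor -/
  γ : ℝ
  γ_pos : 0 < γ
  γ_lt_one : γ < 1

namespace OSPOSG

variable {S A1 A2 O : Type*} [Fintype S] [Fintype A1] [Fintype A2] [Fintype O]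
  [Nonempty S] [Nonempty A1] [Nonempty A2] [Nonempty O]

/-- The minimum reward `r_min`. -/
def rmin (G : OSPOSG S A1 A2 O) : ℝ :=
  Finset.univ.inf' Finset.univ_nonempty fun x : S × A1 × A2 => G.R x.1 x.2.1 x.2.2

/-- The maximum reward `r_max`. -/
def rmax (G : OSPOSG S A1 A2 O) : ℝ :=
  Finset.univ.sup' Finset.univ_nonempty fun x : S × A1 × A2 => G.R x.1 x.2.1 x.2.2

/-- `L = r_min / (1 - γ)`. -/
def Lval (G : OSPOSG S A1 A2 O) : ℝ := G.rmin / (1 - G.γ)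

/-- `U = r_max / (1 - γ)`. -/
def Uval (G : OSPOSG S A1 A2 O) : ℝ := G.rmax / (1 - G.γ)

/-- `δ = (U - L) / 2`. -/
def δval (G : OSPOSG S A1 A2 O) : ℝ := (G.Uval - G.Lval) / 2

/-- The set of stage strategies of player 2. -/
def Pi2 (S A2 : Type*) [Fintype A2] : Set (S → A2 → ℝ) :=
  {π2 | ∀ s, π2 s ∈ stdSimplex ℝ A2}

/-- Vertex values of the value composition `valcomp(π1, ᾱ)`. -/
def valcompVert (G : OSPOSG S A1 A2 O) (π1 : A1 → ℝ) (αb : A1 → O → S → ℝ) (s : S) : ℝ :=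
  Finset.univ.inf' Finset.univ_nonempty fun a2 =>
    ∑ a1, π1 a1 * (G.R s a1 a2 + G.γ * ∑ o, ∑ s', G.T s a1 a2 o s' * αb a1 o s')

/-- The value composition `valcomp(π1, ᾱ)`, a linear function of the belief `b`. -/
def valcomp (G : OSPOSG S A1 A2 O) (π1 : A1 → ℝ) (αb : A1 → O → S → ℝ) (b : S → ℝ) : ℝ :=
  ∑ s, b s * G.valcompVert π1 αb s

/-- `Pr_{b,π1,π2}[a1, o]`: the probability that player 1 plays `a1` and observes `o`. -/
def Pr (G : OSPOSG S A1 A2 O) (b : S → ℝ) (π1 : A1 → ℝ) (π2 : S → A2 → ℝ)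
    (a1 : A1) (o : O) : ℝ :=
  ∑ s, ∑ a2, ∑ s', b s * π1 a1 * π2 s a2 * G.T s a1 a2 o s'

/-- The updated belief `τ(b, a1, π2, o)` of player 1 (junk value `0` if the normalizing
constant vanishes; such terms are always multiplied by a zero probability below). -/
def beliefUpd (G : OSPOSG S A1 A2 O) (b : S → ℝ) (a1 : A1) (π2 : S → A2 → ℝ) (o : O) :
    S → ℝ := fun s' =>
  (∑ s, ∑ a2, b s * π2 s a2 * G.T s a1 a2 o s') /
    (∑ s'', ∑ s, ∑ a2, b s * π2 s a2 * G.T s a1 a2 o s'')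

/-- The stage utility `u^{V,b}(π1, π2)`. -/
def stageU (G : OSPOSG S A1 A2 O) (V : (S → ℝ) → ℝ) (b : S → ℝ)
    (π1 : A1 → ℝ) (π2 : S → A2 → ℝ) : ℝ :=
  (∑ s, ∑ a1, ∑ a2, b s * π1 a1 * π2 s a2 * G.R s a1 a2) +
    G.γ * ∑ a1, ∑ o, G.Pr b π1 π2 a1 o * V (G.beliefUpd b a1 π2 o)

/-- The minimax (Bellman) operator `[HV](b) = sup_{π1} inf_{π2} u^{V,b}(π1,π2)`. -/
def Hop (G : OSPOSG S A1 A2 O) (V : (S → ℝ) → ℝ) (b : S → ℝ) : ℝ :=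
  ⨆ π1 : stdSimplex ℝ A1, ⨅ π2 : Pi2 S A2, G.stageU V b π1.1 π2.1

end OSPOSG

open Filter

/-!
Let `V̂ n = (∑ s, n s) * V ((∑ s, n s)⁻¹ • n)` be the perspective of `V` on the nonnegative
orthant. `H` is a `γ`-contraction for the sup norm on the simplex, so it has at most one bounded
fixpoint, to which value iteration from any bounded start converges uniformly.

For existence: `u^{V,b}(π1, π2)` depends on `b` and `π2` only through the joint weights
`w s a2 = b s * π2 s a2`, linearly except for the terms `π1 a1 * V̂ (unnormalized next belief)`,
and player 2's strategies can be mixed state by state. Hence the perspective of `H V` inherits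
from `V̂` subadditivity (convexity) and the increment bound `V̂ (n + m) ≥ V̂ n + L * ∑ m`, and
`V ≤ U` persists, because `L = r_min + γ L` and `U = r_max + γ U`. These properties survive
pointwise limits and make `V` `(U - L) / 2`-Lipschitz, so the limit of value iteration from the
constant `L` is the required fixpoint.
-/

open Topology

section Perspective

variable {S : Type*} [Fintype S]

def perspective (V : (S → ℝ) → ℝ) (n : S → ℝ) : ℝ :=
  (∑ s, n s) * V ((∑ s, n s)⁻¹ • n)

lemma eq_zero_of_nonneg_of_sum_eq_zero {n : S → ℝ} (hn : 0 ≤ n) (h : ∑ s, n s = 0) : n = 0 :=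
  funext fun s => (Finset.sum_eq_zero_iff_of_nonneg fun s _ => hn s).1 h s (Finset.mem_univ s)

lemma sum_smul_inv_sum_smul {n : S → ℝ} (hn : 0 ≤ n) : (∑ s, n s) • (∑ s, n s)⁻¹ • n = n := by
  by_cases h : ∑ s, n s = 0
  · simp [eq_zero_of_nonneg_of_sum_eq_zero hn h]
  · rw [smul_smul, mul_inv_cancel₀ h, one_smul]

lemma inv_sum_smul_mem_stdSimplex {n : S → ℝ} (hn : 0 ≤ n) (h : ∑ s, n s ≠ 0) :
    (∑ s, n s)⁻¹ • n ∈ stdSimplex ℝ S :=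
  ⟨fun s => mul_nonneg (inv_nonneg.2 (Finset.sum_nonneg fun s _ => hn s)) (hn s), by
    simp [← Finset.mul_sum, inv_mul_cancel₀ h]⟩

lemma perspective_of_mem_stdSimplex {V : (S → ℝ) → ℝ} {b : S → ℝ} (hb : b ∈ stdSimplex ℝ S) :
    perspective V b = V b := by
  simp [perspective, hb.2]

lemma perspective_smul {a : ℝ} (ha : 0 ≤ a) (V : (S → ℝ) → ℝ) (n : S → ℝ) :
    perspective V (a • n) = a * perspective V n := by
  rcases ha.eq_or_lt with rfl | ha
  · simp [perspective]
  · have : (a * ∑ s, n s)⁻¹ • a • n = (∑ s, n s)⁻¹ • n := by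
      rw [smul_smul, mul_inv_rev, mul_assoc, inv_mul_cancel₀ ha.ne', mul_one]
    have hsum : ∑ s, (a • n) s = a * ∑ s, n s := by simp [Finset.mul_sum]
    rw [perspective, hsum, this, mul_assoc, perspective]

lemma perspective_le_add {V W : (S → ℝ) → ℝ} {M : ℝ}
    (h : ∀ p ∈ stdSimplex ℝ S, V p ≤ W p + M) {n : S → ℝ} (hn : 0 ≤ n) :
    perspective V n ≤ perspective W n + M * ∑ s, n s := by
  by_cases hN : ∑ s, n s = 0
  · simp [perspective, hN]
  · have hpos : 0 ≤ ∑ s, n s := Finset.sum_nonneg fun s _ => hn s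
    have := mul_le_mul_of_nonneg_left (h _ (inv_sum_smul_mem_stdSimplex hn hN)) hpos
    simp only [perspective]
    linarith

lemma tendsto_perspective {ι : Type*} {l : Filter ι} {V : ι → (S → ℝ) → ℝ} {W : (S → ℝ) → ℝ}
    (hlim : ∀ b ∈ stdSimplex ℝ S, Tendsto (fun i => V i b) l (𝓝 (W b)))
    {n : S → ℝ} (hn : 0 ≤ n) :
    Tendsto (fun i => perspective (V i) n) l (𝓝 (perspective W n)) := by
  by_cases hN : ∑ s, n s = 0
  · simpa [perspective, hN] using tendsto_const_nhds
  · exact (hlim _ (inv_sum_smul_mem_stdSimplex hn hN)).const_mul _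

end Perspective

section AlphaBounded

variable {S : Type*} [Fintype S] {lo hi : ℝ} {V : (S → ℝ) → ℝ}

def BoundedOnSimplex (V : (S → ℝ) → ℝ) : Prop :=
  ∃ C, ∀ b ∈ stdSimplex ℝ S, |V b| ≤ C

lemma l1dist_comm (p q : S → ℝ) : l1dist p q = l1dist q p :=
  Finset.sum_congr rfl fun _ _ => abs_sub_comm _ _

lemma l1dist_le_card_mul_dist (p q : S → ℝ) : l1dist p q ≤ Fintype.card S * dist p q :=
  calc l1dist p q ≤ ∑ _s : S, dist p q :=
        Finset.sum_le_sum fun s _ =>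
          (Real.dist_eq (p s) (q s)).symm.le.trans (dist_le_pi_dist p q s)
    _ = Fintype.card S * dist p q := by simp

lemma LipOnSimplex.continuousOn {k : ℝ} {f : (S → ℝ) → ℝ} (hf : LipOnSimplex k f) :
    ContinuousOn f (stdSimplex ℝ S) := by
  refine (LipschitzOnWith.of_dist_le_mul (K := (|k| * Fintype.card S).toNNReal)
    fun p hp q hq => ?_).continuousOn
  calc dist (f p) (f q) = |f p - f q| := Real.dist_eq _ _
    _ ≤ k * l1dist p q := hf p hp q hq
    _ ≤ |k| * (Fintype.card S * dist p q) :=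
        mul_le_mul (le_abs_self k) (l1dist_le_card_mul_dist p q)
          (Finset.sum_nonneg fun s _ => abs_nonneg _) (abs_nonneg k)
    _ = _ := by rw [Real.coe_toNNReal _ (by positivity)]; ring

/-- Suprema of linear functions `b ↦ ∑ s, b s * α s` over α-vectors `α ∈ [lo, hi]^S` have these
properties. Unlike convexity together with `lo ≤ V ≤ hi`, they force `(hi - lo) / 2`-Lipschitz
continuity. -/
structure IsAlphaBounded (lo hi : ℝ) (V : (S → ℝ) → ℝ) : Prop where
  perspective_add_le : ∀ ⦃n m : S → ℝ⦄, 0 ≤ n → 0 ≤ m →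
    perspective V (n + m) ≤ perspective V n + perspective V m
  add_le_perspective_add : ∀ ⦃n m : S → ℝ⦄, 0 ≤ n → 0 ≤ m →
    perspective V n + lo * ∑ s, m s ≤ perspective V (n + m)
  le_hi : ∀ b ∈ stdSimplex ℝ S, V b ≤ hi

namespace IsAlphaBounded

lemma const (h : lo ≤ hi) : IsAlphaBounded (S := S) lo hi fun _ => lo where
  perspective_add_le _ _ _ _ := by simp [perspective, Finset.sum_add_distrib, add_mul]
  add_le_perspective_add _ _ _ _ := by simp [perspective, Finset.sum_add_distrib, mul_add, mul_comm]
  le_hi _ _ := h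

variable (hV : IsAlphaBounded lo hi V)
include hV

lemma lo_le {b : S → ℝ} (hb : b ∈ stdSimplex ℝ S) : lo ≤ V b := by
  have := hV.add_le_perspective_add le_rfl hb.1
  simpa [perspective_of_mem_stdSimplex hb, hb.2, perspective] using this

lemma perspective_le {n : S → ℝ} (hn : 0 ≤ n) : perspective V n ≤ hi * ∑ s, n s := by
  simpa [perspective] using
    perspective_le_add (W := fun _ => 0) (fun p hp => by simpa using hV.le_hi p hp) hn

lemma convexOn : ConvexOn ℝ (stdSimplex ℝ S) V := by
  refine ⟨convex_stdSimplex ℝ S, fun x hx y hy a b ha hb hab => ?_⟩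
  rw [← perspective_of_mem_stdSimplex (V := V) (convex_stdSimplex ℝ S hx hy ha hb hab),
    ← perspective_of_mem_stdSimplex (V := V) hx, ← perspective_of_mem_stdSimplex (V := V) hy,
    smul_eq_mul, smul_eq_mul, ← perspective_smul ha, ← perspective_smul hb]
  exact hV.perspective_add_le (smul_nonneg ha hx.1) (smul_nonneg hb hy.1)

/-- Split `p` and `q` into their common part `p ⊓ q` and two pieces of mass `‖p - q‖₁ / 2`;
adding mass costs at most `hi` and at least `lo` per unit. -/
lemma sub_le {p q : S → ℝ} (hp : p ∈ stdSimplex ℝ S) (hq : q ∈ stdSimplex ℝ S) :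
    V p - V q ≤ (hi - lo) / 2 * l1dist p q := by
  set m := p ⊓ q
  have hm : 0 ≤ m := le_inf hp.1 hq.1
  have hpm : 0 ≤ p - m := sub_nonneg.2 inf_le_left
  have hqm : 0 ≤ q - m := sub_nonneg.2 inf_le_right
  have hmass : ∑ s, (p - m) s = ∑ s, (q - m) s := by
    simp [Finset.sum_sub_distrib, hp.2, hq.2]
  have hl1 : l1dist p q = ∑ s, (p - m) s + ∑ s, (q - m) s := by
    rw [l1dist, ← Finset.sum_add_distrib]
    refine Finset.sum_congr rfl fun s _ => ?_
    simp only [Pi.sub_apply, m, Pi.inf_apply]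
    rcases le_total (p s) (q s) with h | h
    · rw [min_eq_left h, abs_of_nonpos (sub_nonpos.2 h)]; ring
    · rw [min_eq_right h, abs_of_nonneg (sub_nonneg.2 h)]; ring
  have hVp : V p ≤ perspective V m + hi * ∑ s, (p - m) s :=
    calc V p = perspective V (m + (p - m)) := by
          rw [add_sub_cancel, perspective_of_mem_stdSimplex hp]
      _ ≤ perspective V m + perspective V (p - m) := hV.perspective_add_le hm hpm
      _ ≤ _ := add_le_add le_rfl (hV.perspective_le hpm)
  have hVq : perspective V m + lo * ∑ s, (q - m) s ≤ V q :=
    calc _ ≤ perspective V (m + (q - m)) := hV.add_le_perspective_add hm hqm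
      _ = V q := by rw [add_sub_cancel, perspective_of_mem_stdSimplex hq]
  rw [hl1, ← hmass]
  rw [← hmass] at hVq
  linarith

lemma lipOnSimplex : LipOnSimplex ((hi - lo) / 2) V := fun p hp q hq =>
  abs_sub_le_iff.2 ⟨hV.sub_le hp hq, l1dist_comm p q ▸ hV.sub_le hq hp⟩

lemma continuousOn : ContinuousOn V (stdSimplex ℝ S) :=
  hV.lipOnSimplex.continuousOn

lemma boundedOnSimplex : BoundedOnSimplex V :=
  ⟨max |lo| |hi|, fun _ hb => abs_le_max_abs_abs (hV.lo_le hb) (hV.le_hi _ hb)⟩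

omit hV

lemma of_tendsto {ι : Type*} {l : Filter ι} [l.NeBot] {V : ι → (S → ℝ) → ℝ} {W : (S → ℝ) → ℝ}
    (hV : ∀ i, IsAlphaBounded lo hi (V i))
    (hlim : ∀ b ∈ stdSimplex ℝ S, Tendsto (fun i => V i b) l (𝓝 (W b))) :
    IsAlphaBounded lo hi W where
  perspective_add_le _ _ hn hm :=
    le_of_tendsto_of_tendsto' (tendsto_perspective hlim (add_nonneg hn hm))
      ((tendsto_perspective hlim hn).add (tendsto_perspective hlim hm))
      fun i => (hV i).perspective_add_le hn hm
  add_le_perspective_add _ _ hn hm :=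
    le_of_tendsto_of_tendsto' ((tendsto_perspective hlim hn).add_const _)
      (tendsto_perspective hlim (add_nonneg hn hm)) fun i => (hV i).add_le_perspective_add hn hm
  le_hi b hb := le_of_tendsto' (hlim b hb) fun i => (hV i).le_hi b hb

end IsAlphaBounded

end AlphaBounded

section SupInf

variable {ι κ : Type*} {C : ℝ}

lemma bddBelow_range_of_abs_le {f : κ → ℝ} (h : ∀ j, |f j| ≤ C) : BddBelow (Set.range f) :=
  ⟨-C, by rintro _ ⟨j, rfl⟩; exact neg_le_of_abs_le (h j)⟩

lemma bddAbove_range_of_abs_le {f : κ → ℝ} (h : ∀ j, |f j| ≤ C) : BddAbove (Set.range f) :=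
  ⟨C, by rintro _ ⟨j, rfl⟩; exact le_of_abs_le (h j)⟩

variable [Nonempty ι] [Nonempty κ]

lemma abs_ciInf_le_of_abs_le {f : κ → ℝ} (h : ∀ j, |f j| ≤ C) : |⨅ j, f j| ≤ C :=
  abs_le.2 ⟨le_ciInf fun j => (abs_le.1 (h j)).1,
    (ciInf_le (bddBelow_range_of_abs_le h) (Classical.arbitrary κ)).trans (le_of_abs_le (h _))⟩

lemma abs_ciSup_le_of_abs_le {f : κ → ℝ} (h : ∀ j, |f j| ≤ C) : |⨆ j, f j| ≤ C :=
  abs_le.2 ⟨(neg_le_of_abs_le (h _)).trans (le_ciSup (bddAbove_range_of_abs_le h)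
    (Classical.arbitrary κ)), ciSup_le fun j => le_of_abs_le (h j)⟩

lemma abs_ciSup_ciInf_le {F : ι → κ → ℝ} (h : ∀ i j, |F i j| ≤ C) : |⨆ i, ⨅ j, F i j| ≤ C :=
  abs_ciSup_le_of_abs_le fun i => abs_ciInf_le_of_abs_le (h i)

lemma ciSup_ciInf_le_add {F F' H : ι → κ → ℝ} (hF : ∃ C, ∀ i j, |F i j| ≤ C)
    (hF' : ∃ C, ∀ i j, |F' i j| ≤ C) (hH : ∃ C, ∀ i j, |H i j| ≤ C)
    (h : ∀ i j j', ∃ j'', H i j'' ≤ F i j + F' i j') :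
    ⨆ i, ⨅ j, H i j ≤ (⨆ i, ⨅ j, F i j) + ⨆ i, ⨅ j, F' i j := by
  obtain ⟨CF, hF⟩ := hF
  obtain ⟨CF', hF'⟩ := hF'
  obtain ⟨CH, hH⟩ := hH
  refine ciSup_le fun i => ?_
  have hi : ⨅ j, H i j ≤ (⨅ j, F i j) + ⨅ j, F' i j := le_ciInf_add_ciInf fun j j' => by
    obtain ⟨j'', hj''⟩ := h i j j'
    exact (ciInf_le (bddBelow_range_of_abs_le (hH i)) j'').trans hj''
  exact hi.trans (add_le_add
    (le_ciSup (bddAbove_range_of_abs_le fun i => abs_ciInf_le_of_abs_le (hF i)) i)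
    (le_ciSup (bddAbove_range_of_abs_le fun i => abs_ciInf_le_of_abs_le (hF' i)) i))

lemma ciSup_ciInf_add_le {F H : ι → κ → ℝ} {e : ℝ} (hF : ∃ C, ∀ i j, |F i j| ≤ C)
    (hH : ∃ C, ∀ i j, |H i j| ≤ C) (h : ∀ i j, F i j + e ≤ H i j) :
    (⨆ i, ⨅ j, F i j) + e ≤ ⨆ i, ⨅ j, H i j := by
  obtain ⟨CF, hF⟩ := hF
  obtain ⟨CH, hH⟩ := hH
  rw [← le_sub_iff_add_le]
  refine ciSup_le fun i => le_sub_iff_add_le.2 ?_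
  refine le_trans ?_ (le_ciSup (bddAbove_range_of_abs_le fun i => abs_ciInf_le_of_abs_le (hH i)) i)
  exact le_ciInf fun j =>
    (add_le_add (ciInf_le (bddBelow_range_of_abs_le (hF i)) j) le_rfl).trans (h i j)

end SupInf

lemma exists_mem_stdSimplex_smul_eq_add {ι : Type*} [Fintype ι] {x y : ℝ} (hx : 0 ≤ x)
    (hy : 0 ≤ y) {p q : ι → ℝ} (hp : p ∈ stdSimplex ℝ ι) (hq : q ∈ stdSimplex ℝ ι) :
    ∃ r ∈ stdSimplex ℝ ι, (x + y) • r = x • p + y • q := by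
  rcases (add_nonneg hx hy).eq_or_lt with h | h
  · obtain ⟨rfl, rfl⟩ : x = 0 ∧ y = 0 := ⟨by linarith, by linarith⟩
    exact ⟨p, hp, by simp⟩
  · refine ⟨(x / (x + y)) • p + (y / (x + y)) • q,
      convex_stdSimplex ℝ ι hp hq (by positivity) (by positivity) (by field_simp), ?_⟩
    rw [smul_add, smul_smul, smul_smul, mul_div_cancel₀ _ h.ne', mul_div_cancel₀ _ h.ne']

lemma tendstoUniformlyOn_of_abs_sub_le {X : Type*} {F : ℕ → X → ℝ} {f : X → ℝ} {s : Set X}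
    {u : ℕ → ℝ} (hu : Tendsto u atTop (𝓝 0)) (h : ∀ k, ∀ x ∈ s, |F k x - f x| ≤ u k) :
    TendstoUniformlyOn F f atTop s := by
  rw [Metric.tendstoUniformlyOn_iff]
  intro ε hε
  filter_upwards [hu.eventually (gt_mem_nhds hε)] with k hk x hx
  rw [Real.dist_eq, abs_sub_comm]
  exact (h k x hx).trans_lt hk


namespace OSPOSG

section Pi2

variable {S A2 : Type*} [Fintype A2]

lemma sum_sum_mul_of_mem_Pi2 [Fintype S] {π2 : S → A2 → ℝ} (hπ2 : π2 ∈ Pi2 S A2) (n : S → ℝ) :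
    ∑ s, ∑ a2, n s * π2 s a2 = ∑ s, n s := by
  simp [← Finset.mul_sum, (hπ2 _).2]

lemma mul_nonneg_of_mem_Pi2 {π2 : S → A2 → ℝ} (hπ2 : π2 ∈ Pi2 S A2) {n : S → ℝ} (hn : 0 ≤ n) :
    0 ≤ fun s a2 => n s * π2 s a2 := fun s a2 => mul_nonneg (hn s) ((hπ2 s).1 a2)

lemma exists_mem_Pi2_mul_add {n m : S → ℝ} (hn : 0 ≤ n) (hm : 0 ≤ m) {π2 π2' : S → A2 → ℝ}
    (hπ2 : π2 ∈ Pi2 S A2) (hπ2' : π2' ∈ Pi2 S A2) :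
    ∃ π2'' ∈ Pi2 S A2, ∀ s a2, (n s + m s) * π2'' s a2 = n s * π2 s a2 + m s * π2' s a2 := by
  choose r hr hrx using fun s => exists_mem_stdSimplex_smul_eq_add (hn s) (hm s) (hπ2 s) (hπ2' s)
  exact ⟨r, hr, fun s a2 => by simpa using congrFun (hrx s) a2⟩

end Pi2

variable {S A1 A2 O : Type*} [Fintype S] [Fintype A1] [Fintype A2] [Fintype O]

section JointUtility

variable (G : OSPOSG S A1 A2 O) {V W : (S → ℝ) → ℝ} {π1 : A1 → ℝ} {w w' : S → A2 → ℝ}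

/-- The unnormalized belief of player 1 after `a1` and `o`, when the state and the action of
player 2 have joint weights `w`. -/
def nextMass (w : S → A2 → ℝ) (a1 : A1) (o : O) : S → ℝ :=
  fun s' => ∑ s, ∑ a2, w s a2 * G.T s a1 a2 o s'

def expReward (π1 : A1 → ℝ) (w : S → A2 → ℝ) : ℝ :=
  ∑ s, ∑ a1, ∑ a2, π1 a1 * w s a2 * G.R s a1 a2

/-- The stage utility `u^{V,b}(π1, π2)` as a function of the joint weights
`w s a2 = b s * π2 s a2` of the state and the action of player 2. -/
def jointU (V : (S → ℝ) → ℝ) (π1 : A1 → ℝ) (w : S → A2 → ℝ) : ℝ :=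
  G.expReward π1 w + G.γ * ∑ a1, ∑ o, π1 a1 * perspective V (G.nextMass w a1 o)

lemma nextMass_nonneg (hw : 0 ≤ w) (a1 : A1) (o : O) : 0 ≤ G.nextMass w a1 o := fun s' =>
  Finset.sum_nonneg fun s _ => Finset.sum_nonneg fun a2 _ =>
    mul_nonneg (hw s a2) (G.T_nonneg s a1 a2 o s')

lemma nextMass_add (w w' : S → A2 → ℝ) (a1 : A1) (o : O) :
    G.nextMass (w + w') a1 o = G.nextMass w a1 o + G.nextMass w' a1 o := by
  ext s'
  simp [nextMass, add_mul, Finset.sum_add_distrib]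

lemma nextMass_smul (c : ℝ) (w : S → A2 → ℝ) (a1 : A1) (o : O) :
    G.nextMass (c • w) a1 o = c • G.nextMass w a1 o := by
  ext s'
  simp [nextMass, Finset.mul_sum, mul_assoc]

lemma sum_nextMass (w : S → A2 → ℝ) (a1 : A1) :
    ∑ o, ∑ s', G.nextMass w a1 o s' = ∑ s, ∑ a2, w s a2 := by
  calc ∑ o, ∑ s', G.nextMass w a1 o s'
      = ∑ o, ∑ s, ∑ a2, ∑ s', w s a2 * G.T s a1 a2 o s' :=
        Finset.sum_congr rfl fun _ _ =>
          Finset.sum_comm.trans (Finset.sum_congr rfl fun _ _ => Finset.sum_comm)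
    _ = ∑ s, ∑ a2, ∑ o, ∑ s', w s a2 * G.T s a1 a2 o s' :=
        Finset.sum_comm.trans (Finset.sum_congr rfl fun _ _ => Finset.sum_comm)
    _ = ∑ s, ∑ a2, w s a2 := by simp_rw [← Finset.mul_sum, G.T_sum, mul_one]

lemma sum_mul_sum_nextMass (hπ1 : ∑ a1, π1 a1 = 1) (w : S → A2 → ℝ) :
    ∑ a1, ∑ o, π1 a1 * ∑ s', G.nextMass w a1 o s' = ∑ s, ∑ a2, w s a2 := by
  simp_rw [← Finset.mul_sum, sum_nextMass, ← Finset.sum_mul, hπ1, one_mul]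

lemma sum_mul_add_mul_sum_nextMass (hπ1 : ∑ a1, π1 a1 = 1) (f : A1 → O → ℝ) (c : ℝ)
    (w : S → A2 → ℝ) :
    ∑ a1, ∑ o, π1 a1 * (f a1 o + c * ∑ s', G.nextMass w a1 o s') =
      ∑ a1, ∑ o, π1 a1 * f a1 o + c * ∑ s, ∑ a2, w s a2 := by
  rw [← G.sum_mul_sum_nextMass hπ1 w]
  simp only [mul_add, Finset.sum_add_distrib, Finset.mul_sum, mul_left_comm]

lemma expReward_add (π1 : A1 → ℝ) (w w' : S → A2 → ℝ) :
    G.expReward π1 (w + w') = G.expReward π1 w + G.expReward π1 w' := by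
  simp [expReward, mul_add, add_mul, Finset.sum_add_distrib]

lemma expReward_smul (π1 : A1 → ℝ) (c : ℝ) (w : S → A2 → ℝ) :
    G.expReward π1 (c • w) = c * G.expReward π1 w := by
  simp only [expReward, Finset.mul_sum, Pi.smul_apply, smul_eq_mul]
  exact Finset.sum_congr rfl fun _ _ => Finset.sum_congr rfl fun _ _ =>
    Finset.sum_congr rfl fun _ _ => by ring

lemma sum_sum_sum_mul (hπ1 : ∑ a1, π1 a1 = 1) (w : S → A2 → ℝ) (c : ℝ) :
    ∑ s, ∑ a1, ∑ a2, π1 a1 * w s a2 * c = c * ∑ s, ∑ a2, w s a2 := by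
  simp_rw [mul_assoc, ← Finset.mul_sum, ← Finset.sum_mul, hπ1, one_mul, Finset.mul_sum, mul_comm]
  simp [Finset.mul_sum]

lemma expReward_le (hπ1 : π1 ∈ stdSimplex ℝ A1) (hw : 0 ≤ w) {c : ℝ}
    (hc : ∀ s a1 a2, G.R s a1 a2 ≤ c) : G.expReward π1 w ≤ c * ∑ s, ∑ a2, w s a2 := by
  rw [← sum_sum_sum_mul hπ1.2, expReward]
  exact Finset.sum_le_sum fun s _ => Finset.sum_le_sum fun a1 _ => Finset.sum_le_sum fun a2 _ =>
    mul_le_mul_of_nonneg_left (hc s a1 a2) (mul_nonneg (hπ1.1 a1) (hw s a2))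

lemma le_expReward (hπ1 : π1 ∈ stdSimplex ℝ A1) (hw : 0 ≤ w) {c : ℝ}
    (hc : ∀ s a1 a2, c ≤ G.R s a1 a2) : c * ∑ s, ∑ a2, w s a2 ≤ G.expReward π1 w := by
  rw [← sum_sum_sum_mul hπ1.2, expReward]
  exact Finset.sum_le_sum fun s _ => Finset.sum_le_sum fun a1 _ => Finset.sum_le_sum fun a2 _ =>
    mul_le_mul_of_nonneg_left (hc s a1 a2) (mul_nonneg (hπ1.1 a1) (hw s a2))

lemma jointU_zero_fun (π1 : A1 → ℝ) (w : S → A2 → ℝ) :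
    G.jointU (fun _ => 0) π1 w = G.expReward π1 w := by
  simp [jointU, perspective]

lemma jointU_smul {c : ℝ} (hc : 0 ≤ c) (V : (S → ℝ) → ℝ) (π1 : A1 → ℝ) (w : S → A2 → ℝ) :
    G.jointU V π1 (c • w) = c * G.jointU V π1 w := by
  simp only [jointU, expReward_smul, nextMass_smul, perspective_smul hc, mul_add, Finset.mul_sum]
  congr 1
  exact Finset.sum_congr rfl fun _ _ => Finset.sum_congr rfl fun _ _ => by ring

lemma jointU_add_le
    (hV : ∀ ⦃n m : S → ℝ⦄, 0 ≤ n → 0 ≤ m →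
      perspective V (n + m) ≤ perspective V n + perspective V m)
    (hπ1 : 0 ≤ π1) (hw : 0 ≤ w) (hw' : 0 ≤ w') :
    G.jointU V π1 (w + w') ≤ G.jointU V π1 w + G.jointU V π1 w' := by
  have hcont : ∑ a1, ∑ o, π1 a1 * perspective V (G.nextMass (w + w') a1 o) ≤
      ∑ a1, ∑ o, π1 a1 * perspective V (G.nextMass w a1 o) +
        ∑ a1, ∑ o, π1 a1 * perspective V (G.nextMass w' a1 o) := by
    simp_rw [← Finset.sum_add_distrib, ← mul_add, nextMass_add]
    exact Finset.sum_le_sum fun a1 _ => Finset.sum_le_sum fun o _ => mul_le_mul_of_nonneg_left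
      (hV (G.nextMass_nonneg hw a1 o) (G.nextMass_nonneg hw' a1 o)) (hπ1 a1)
  have := mul_le_mul_of_nonneg_left hcont G.γ_pos.le
  simp only [jointU, expReward_add]
  linarith

lemma add_le_jointU_add {lo c : ℝ}
    (hV : ∀ ⦃n m : S → ℝ⦄, 0 ≤ n → 0 ≤ m → perspective V n + lo * ∑ s, m s ≤ perspective V (n + m))
    (hπ1 : π1 ∈ stdSimplex ℝ A1) (hw : 0 ≤ w) (hw' : 0 ≤ w') (hc : ∀ s a1 a2, c ≤ G.R s a1 a2) :
    G.jointU V π1 w + (c + G.γ * lo) * ∑ s, ∑ a2, w' s a2 ≤ G.jointU V π1 (w + w') := by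
  have hcont : ∑ a1, ∑ o, π1 a1 * perspective V (G.nextMass w a1 o) + lo * ∑ s, ∑ a2, w' s a2 ≤
      ∑ a1, ∑ o, π1 a1 * perspective V (G.nextMass (w + w') a1 o) := by
    rw [← G.sum_mul_add_mul_sum_nextMass hπ1.2]
    simp_rw [nextMass_add]
    exact Finset.sum_le_sum fun a1 _ => Finset.sum_le_sum fun o _ => mul_le_mul_of_nonneg_left
      (hV (G.nextMass_nonneg hw a1 o) (G.nextMass_nonneg hw' a1 o)) (hπ1.1 a1)
  have := mul_le_mul_of_nonneg_left hcont G.γ_pos.le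
  have := G.le_expReward hπ1 hw' hc
  simp only [jointU, expReward_add]
  linarith

lemma jointU_le_add {M : ℝ} (h : ∀ p ∈ stdSimplex ℝ S, V p ≤ W p + M)
    (hπ1 : π1 ∈ stdSimplex ℝ A1) (hw : 0 ≤ w) :
    G.jointU V π1 w ≤ G.jointU W π1 w + G.γ * M * ∑ s, ∑ a2, w s a2 := by
  have hcont : ∑ a1, ∑ o, π1 a1 * perspective V (G.nextMass w a1 o) ≤
      ∑ a1, ∑ o, π1 a1 * perspective W (G.nextMass w a1 o) + M * ∑ s, ∑ a2, w s a2 := by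
    rw [← G.sum_mul_add_mul_sum_nextMass hπ1.2]
    exact Finset.sum_le_sum fun a1 _ => Finset.sum_le_sum fun o _ => mul_le_mul_of_nonneg_left
      (perspective_le_add h (G.nextMass_nonneg hw a1 o)) (hπ1.1 a1)
  have := mul_le_mul_of_nonneg_left hcont G.γ_pos.le
  simp only [jointU]
  linarith

lemma jointU_le {hi c : ℝ} (hV : ∀ p ∈ stdSimplex ℝ S, V p ≤ hi) (hπ1 : π1 ∈ stdSimplex ℝ A1)
    (hw : 0 ≤ w) (hc : ∀ s a1 a2, G.R s a1 a2 ≤ c) :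
    G.jointU V π1 w ≤ (c + G.γ * hi) * ∑ s, ∑ a2, w s a2 := by
  have := G.jointU_le_add (W := fun _ => 0) (M := hi) (fun p hp => by simpa using hV p hp) hπ1 hw
  rw [jointU_zero_fun] at this
  linarith [G.expReward_le hπ1 hw hc]

lemma abs_jointU_le {C K : ℝ} (hV : ∀ p ∈ stdSimplex ℝ S, |V p| ≤ C)
    (hπ1 : π1 ∈ stdSimplex ℝ A1) (hw : 0 ≤ w) (hK : ∀ s a1 a2, |G.R s a1 a2| ≤ K) :
    |G.jointU V π1 w| ≤ (K + G.γ * C) * ∑ s, ∑ a2, w s a2 := by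
  have hlow := G.jointU_le_add (V := fun _ => 0) (W := V) (M := C)
    (fun p hp => by linarith [neg_le_of_abs_le (hV p hp)]) hπ1 hw
  rw [jointU_zero_fun] at hlow
  refine abs_le.2 ⟨?_, G.jointU_le (fun p hp => le_of_abs_le (hV p hp)) hπ1 hw
    fun s a1 a2 => le_of_abs_le (hK s a1 a2)⟩
  linarith [G.le_expReward hπ1 hw fun s a1 a2 => neg_le_of_abs_le (hK s a1 a2)]

lemma stageU_eq_jointU (V : (S → ℝ) → ℝ) (b : S → ℝ) (π1 : A1 → ℝ) (π2 : S → A2 → ℝ) :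
    G.stageU V b π1 π2 = G.jointU V π1 fun s a2 => b s * π2 s a2 := by
  have hPr : ∀ a1 o, G.Pr b π1 π2 a1 o =
      π1 a1 * ∑ s', G.nextMass (fun s a2 => b s * π2 s a2) a1 o s' := fun a1 o => by
    simp only [Pr, nextMass, Finset.mul_sum]
    refine (Finset.sum_congr rfl fun _ _ => Finset.sum_comm).trans (Finset.sum_comm.trans ?_)
    exact Finset.sum_congr rfl fun _ _ => Finset.sum_congr rfl fun _ _ =>
      Finset.sum_congr rfl fun _ _ => by ring
  have hupd : ∀ a1 o, G.beliefUpd b a1 π2 o =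
      (∑ s', G.nextMass (fun s a2 => b s * π2 s a2) a1 o s')⁻¹ •
        G.nextMass (fun s a2 => b s * π2 s a2) a1 o := fun a1 o => by
    ext s'
    simp [beliefUpd, nextMass, div_eq_inv_mul]
  simp only [stageU, jointU, expReward, perspective, hPr, hupd]
  congr 1
  · exact Finset.sum_congr rfl fun _ _ => Finset.sum_congr rfl fun _ _ =>
      Finset.sum_congr rfl fun _ _ => by ring
  · simp only [mul_assoc]

end JointUtility

section Bellman

variable (G : OSPOSG S A1 A2 O) {V W : (S → ℝ) → ℝ}

lemma exists_abs_R_le : ∃ K, ∀ s a1 a2, |G.R s a1 a2| ≤ K := by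
  obtain ⟨K, hK⟩ := (Set.finite_range fun x : S × A1 × A2 => |G.R x.1 x.2.1 x.2.2|).bddAbove
  exact ⟨K, fun s a1 a2 => hK ⟨(s, a1, a2), rfl⟩⟩

lemma perspective_Hop {n : S → ℝ} (hn : 0 ≤ n) :
    perspective (G.Hop V) n =
      ⨆ π1 : stdSimplex ℝ A1, ⨅ π2 : Pi2 S A2, G.jointU V π1.1 fun s a2 => n s * π2.1 s a2 := by
  have hN : 0 ≤ ∑ s, n s := Finset.sum_nonneg fun s _ => hn s
  have hx : ∀ s, (∑ s, n s) * ((∑ s, n s)⁻¹ * n s) = n s :=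
    congrFun (sum_smul_inv_sum_smul hn)
  simp only [perspective, Hop, Real.mul_iSup_of_nonneg hN, Real.mul_iInf_of_nonneg hN,
    stageU_eq_jointU, ← G.jointU_smul hN]
  refine iSup_congr fun π1 => iInf_congr fun π2 => congrArg _ ?_
  ext s a2
  simp only [Pi.smul_apply, smul_eq_mul]
  rw [← mul_assoc, hx]

lemma exists_abs_jointU_le (hV : BoundedOnSimplex V) :
    ∃ C, ∀ n : S → ℝ, 0 ≤ n → ∀ (π1 : stdSimplex ℝ A1) (π2 : Pi2 S A2),
      |G.jointU V π1.1 fun s a2 => n s * π2.1 s a2| ≤ C * ∑ s, n s := by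
  obtain ⟨C, hC⟩ := hV
  obtain ⟨K, hK⟩ := G.exists_abs_R_le
  refine ⟨K + G.γ * C, fun n hn π1 π2 => ?_⟩
  simpa [sum_sum_mul_of_mem_Pi2 π2.2] using
    G.abs_jointU_le hC π1.2 (mul_nonneg_of_mem_Pi2 π2.2 hn) hK

variable [Nonempty A1] [Nonempty A2]

instance : Nonempty (Pi2 S A2) :=
  ⟨⟨fun _ => (Classical.arbitrary (stdSimplex ℝ A2)).1,
    fun _ => (Classical.arbitrary (stdSimplex ℝ A2)).2⟩⟩

lemma boundedOnSimplex_Hop (hV : BoundedOnSimplex V) : BoundedOnSimplex (G.Hop V) := by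
  obtain ⟨C, hC⟩ := G.exists_abs_jointU_le hV
  refine ⟨C, fun b hb => ?_⟩
  rw [← perspective_of_mem_stdSimplex (V := G.Hop V) hb, perspective_Hop G hb.1]
  exact abs_ciSup_ciInf_le fun π1 π2 => by simpa [hb.2] using hC b hb.1 π1 π2

lemma Hop_le_add (hV : BoundedOnSimplex V) (hW : BoundedOnSimplex W) {M : ℝ}
    (h : ∀ p ∈ stdSimplex ℝ S, V p ≤ W p + M) {b : S → ℝ} (hb : b ∈ stdSimplex ℝ S) :
    G.Hop V b ≤ G.Hop W b + G.γ * M := by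
  obtain ⟨CV, hCV⟩ := G.exists_abs_jointU_le hV
  obtain ⟨CW, hCW⟩ := G.exists_abs_jointU_le hW
  rw [← perspective_of_mem_stdSimplex (V := G.Hop V) hb,
    ← perspective_of_mem_stdSimplex (V := G.Hop W) hb, perspective_Hop G hb.1,
    perspective_Hop G hb.1]
  have := ciSup_ciInf_add_le (e := -(G.γ * M)) ⟨_, hCV b hb.1⟩ ⟨_, hCW b hb.1⟩ fun π1 π2 => by
    have := G.jointU_le_add h π1.2 (mul_nonneg_of_mem_Pi2 π2.2 hb.1)
    rw [sum_sum_mul_of_mem_Pi2 π2.2, hb.2] at this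
    linarith
  linarith

lemma abs_Hop_sub_le (hV : BoundedOnSimplex V) (hW : BoundedOnSimplex W) {M : ℝ}
    (h : ∀ p ∈ stdSimplex ℝ S, |V p - W p| ≤ M) {b : S → ℝ} (hb : b ∈ stdSimplex ℝ S) :
    |G.Hop V b - G.Hop W b| ≤ G.γ * M := by
  have h₁ := G.Hop_le_add hV hW (fun p hp => by linarith [le_of_abs_le (h p hp)]) hb
  have h₂ := G.Hop_le_add hW hV (fun p hp => by linarith [neg_le_of_abs_le (h p hp)]) hb
  exact abs_sub_le_iff.2 ⟨by linarith, by linarith⟩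

end Bellman

section

variable [Nonempty S] [Nonempty A1] [Nonempty A2] (G : OSPOSG S A1 A2 O) {V : (S → ℝ) → ℝ}

lemma rmin_le_R (s : S) (a1 : A1) (a2 : A2) : G.rmin ≤ G.R s a1 a2 :=
  Finset.inf'_le (fun x : S × A1 × A2 => G.R x.1 x.2.1 x.2.2) (Finset.mem_univ (s, a1, a2))

lemma R_le_rmax (s : S) (a1 : A1) (a2 : A2) : G.R s a1 a2 ≤ G.rmax :=
  Finset.le_sup' (fun x : S × A1 × A2 => G.R x.1 x.2.1 x.2.2) (Finset.mem_univ (s, a1, a2))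

lemma Lval_le_Uval : G.Lval ≤ G.Uval := by
  obtain ⟨s, a1, a2⟩ : Nonempty (S × A1 × A2) := inferInstance
  exact div_le_div_of_nonneg_right ((G.rmin_le_R s a1 a2).trans (G.R_le_rmax s a1 a2))
    (by linarith [G.γ_lt_one])

lemma rmin_add_γ_mul_Lval : G.rmin + G.γ * G.Lval = G.Lval := by
  have : 1 - G.γ ≠ 0 := by linarith [G.γ_lt_one]
  rw [Lval]; field_simp; ring

lemma rmax_add_γ_mul_Uval : G.rmax + G.γ * G.Uval = G.Uval := by
  have : 1 - G.γ ≠ 0 := by linarith [G.γ_lt_one]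
  rw [Uval]; field_simp; ring

lemma isAlphaBounded_Hop (hV : IsAlphaBounded G.Lval G.Uval V) :
    IsAlphaBounded G.Lval G.Uval (G.Hop V) := by
  obtain ⟨C, hC⟩ := G.exists_abs_jointU_le hV.boundedOnSimplex
  have hbdd : ∀ {n : S → ℝ}, 0 ≤ n → ∃ C', ∀ (π1 : stdSimplex ℝ A1) (π2 : Pi2 S A2),
      |G.jointU V π1.1 fun s a2 => n s * π2.1 s a2| ≤ C' := fun hn => ⟨_, hC _ hn⟩
  refine ⟨fun n m hn hm => ?_, fun n m hn hm => ?_, fun b hb => ?_⟩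
  · rw [perspective_Hop G hn, perspective_Hop G hm, perspective_Hop G (add_nonneg hn hm)]
    refine ciSup_ciInf_le_add (hbdd hn) (hbdd hm) (hbdd (add_nonneg hn hm)) fun π1 π2 π2' => ?_
    obtain ⟨π2'', hπ2'', hmix⟩ := exists_mem_Pi2_mul_add hn hm π2.2 π2'.2
    refine ⟨⟨π2'', hπ2''⟩, ?_⟩
    have hsplit : (fun s a2 => (n + m) s * π2'' s a2) =
        (fun s a2 => n s * π2.1 s a2) + fun s a2 => m s * π2'.1 s a2 := by
      ext s a2
      exact hmix s a2
    rw [hsplit]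
    exact G.jointU_add_le hV.perspective_add_le π1.2.1 (mul_nonneg_of_mem_Pi2 π2.2 hn)
      (mul_nonneg_of_mem_Pi2 π2'.2 hm)
  · rw [perspective_Hop G hn, perspective_Hop G (add_nonneg hn hm)]
    refine ciSup_ciInf_add_le (hbdd hn) (hbdd (add_nonneg hn hm)) fun π1 π2 => ?_
    have hsplit : (fun s a2 => (n + m) s * π2.1 s a2) =
        (fun s a2 => n s * π2.1 s a2) + fun s a2 => m s * π2.1 s a2 := by
      ext s a2
      exact add_mul _ _ _
    have := G.add_le_jointU_add hV.add_le_perspective_add π1.2 (mul_nonneg_of_mem_Pi2 π2.2 hn)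
      (mul_nonneg_of_mem_Pi2 π2.2 hm) G.rmin_le_R
    rwa [rmin_add_γ_mul_Lval, sum_sum_mul_of_mem_Pi2 π2.2, ← hsplit] at this
  · rw [← perspective_of_mem_stdSimplex (V := G.Hop V) hb, perspective_Hop G hb.1]
    refine ciSup_le fun π1 => (ciInf_le (bddBelow_range_of_abs_le (hC b hb.1 π1))
      (Classical.arbitrary _)).trans ?_
    have hπ2 := (Classical.arbitrary (Pi2 S A2)).2
    have := G.jointU_le hV.le_hi π1.2 (mul_nonneg_of_mem_Pi2 hπ2 hb.1) G.R_le_rmax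
    rwa [rmax_add_γ_mul_Uval, sum_sum_mul_of_mem_Pi2 hπ2, hb.2, mul_one] at this

end

section

variable [Nonempty A1] [Nonempty A2] (G : OSPOSG S A1 A2 O) {V : (S → ℝ) → ℝ}
  {W W' : ℕ → (S → ℝ) → ℝ}

lemma boundedOnSimplex_iterate (hW : ∀ k, ∀ b ∈ stdSimplex ℝ S, W (k + 1) b = G.Hop (W k) b)
    (h0 : BoundedOnSimplex (W 0)) (k : ℕ) : BoundedOnSimplex (W k) := by
  induction k with
  | zero => exact h0
  | succ k ih =>
    obtain ⟨C, hC⟩ := G.boundedOnSimplex_Hop ih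
    exact ⟨C, fun b hb => hW k b hb ▸ hC b hb⟩

lemma abs_sub_le_of_iterate (hW : ∀ k, ∀ b ∈ stdSimplex ℝ S, W (k + 1) b = G.Hop (W k) b)
    (hW' : ∀ k, ∀ b ∈ stdSimplex ℝ S, W' (k + 1) b = G.Hop (W' k) b)
    (hbW : ∀ k, BoundedOnSimplex (W k)) (hbW' : ∀ k, BoundedOnSimplex (W' k)) {M : ℝ}
    (h0 : ∀ b ∈ stdSimplex ℝ S, |W 0 b - W' 0 b| ≤ M) (k : ℕ) :
    ∀ b ∈ stdSimplex ℝ S, |W k b - W' k b| ≤ G.γ ^ k * M := by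
  induction k with
  | zero => simpa using h0
  | succ k ih =>
    intro b hb
    rw [hW k b hb, hW' k b hb, pow_succ', mul_assoc]
    exact G.abs_Hop_sub_le (hbW k) (hbW' k) ih hb

lemma tendstoUniformlyOn_iterate (hV : BoundedOnSimplex V)
    (hfix : ∀ b ∈ stdSimplex ℝ S, G.Hop V b = V b)
    (hW : ∀ k, ∀ b ∈ stdSimplex ℝ S, W (k + 1) b = G.Hop (W k) b)
    (h0 : BoundedOnSimplex (W 0)) : TendstoUniformlyOn W V atTop (stdSimplex ℝ S) := by
  obtain ⟨C0, hC0⟩ := h0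
  obtain ⟨CV, hCV⟩ := hV
  have hlim : Tendsto (fun k => G.γ ^ k * (C0 + CV)) atTop (𝓝 0) := by
    simpa using (tendsto_pow_atTop_nhds_zero_of_lt_one G.γ_pos.le G.γ_lt_one).mul_const (C0 + CV)
  exact tendstoUniformlyOn_of_abs_sub_le hlim <| G.abs_sub_le_of_iterate (W' := fun _ => V) hW
    (fun _ b hb => (hfix b hb).symm) (G.boundedOnSimplex_iterate hW ⟨C0, hC0⟩)
    (fun _ => ⟨CV, hCV⟩) fun b hb => (abs_sub _ _).trans (add_le_add (hC0 b hb) (hCV b hb))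

lemma Hop_eq_of_tendstoUniformlyOn (hV : BoundedOnSimplex V)
    (hW : ∀ k, ∀ b ∈ stdSimplex ℝ S, W (k + 1) b = G.Hop (W k) b)
    (hbW : ∀ k, BoundedOnSimplex (W k)) (hlim : TendstoUniformlyOn W V atTop (stdSimplex ℝ S))
    {b : S → ℝ} (hb : b ∈ stdSimplex ℝ S) : G.Hop V b = V b := by
  refine tendsto_nhds_unique (f := fun k => W (k + 1) b) ?_
    ((hlim.tendsto_at hb).comp (tendsto_add_atTop_nat 1))
  rw [Metric.tendsto_nhds]
  intro ε hε
  filter_upwards [Metric.tendstoUniformlyOn_iff.1 hlim ε hε] with k hk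
  rw [hW k b hb, Real.dist_eq]
  calc |G.Hop (W k) b - G.Hop V b| ≤ G.γ * ε :=
        G.abs_Hop_sub_le (hbW k) hV
          (fun p hp => by rw [← Real.dist_eq, dist_comm]; exact (hk p hp).le) hb
    _ < ε := (mul_lt_iff_lt_one_left hε).2 G.γ_lt_one

lemma exists_tendstoUniformlyOn_iterate
    (hW : ∀ k, ∀ b ∈ stdSimplex ℝ S, W (k + 1) b = G.Hop (W k) b)
    (hbW : ∀ k, BoundedOnSimplex (W k)) {M : ℝ} (h0 : ∀ b ∈ stdSimplex ℝ S, |W 0 b - W 1 b| ≤ M) :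
    ∃ V, TendstoUniformlyOn W V atTop (stdSimplex ℝ S) := by
  have hstep : ∀ b ∈ stdSimplex ℝ S, ∀ k, dist (W k b) (W (k + 1) b) ≤ M * G.γ ^ k :=
    fun b hb k => by
      rw [Real.dist_eq, mul_comm]
      exact G.abs_sub_le_of_iterate (W' := fun k => W (k + 1)) hW (fun k => hW (k + 1)) hbW
        (fun k => hbW (k + 1)) h0 k b hb
  refine ⟨fun b => limUnder atTop fun k => W k b,
    tendstoUniformlyOn_of_abs_sub_le (u := fun k => M * G.γ ^ k / (1 - G.γ)) ?_ fun k b hb => ?_⟩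
  · simpa using ((tendsto_pow_atTop_nhds_zero_of_lt_one G.γ_pos.le G.γ_lt_one).const_mul
      M).div_const (1 - G.γ)
  · simpa [Real.dist_eq] using dist_le_of_le_geometric_of_tendsto _ _ G.γ_lt_one (hstep b hb)
      (cauchySeq_of_le_geometric _ _ G.γ_lt_one (hstep b hb)).tendsto_limUnder k

lemma exists_isAlphaBounded_fixpoint [Nonempty S] :
    ∃ V, IsAlphaBounded G.Lval G.Uval V ∧ ∀ b ∈ stdSimplex ℝ S, G.Hop V b = V b := by
  set W : ℕ → (S → ℝ) → ℝ := fun k => G.Hop^[k] fun _ => G.Lval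
  have hW : ∀ k, ∀ b ∈ stdSimplex ℝ S, W (k + 1) b = G.Hop (W k) b := fun k _ _ => by
    simp only [W, Function.iterate_succ_apply']
  have hαW : ∀ k, IsAlphaBounded G.Lval G.Uval (W k) := by
    intro k
    induction k with
    | zero => exact IsAlphaBounded.const G.Lval_le_Uval
    | succ k ih => simpa only [W, Function.iterate_succ_apply'] using G.isAlphaBounded_Hop ih
  have hbW : ∀ k, BoundedOnSimplex (W k) := fun k => (hαW k).boundedOnSimplex
  obtain ⟨V, hlim⟩ := G.exists_tendstoUniformlyOn_iterate hW hbW (M := G.Uval - G.Lval)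
    fun b hb => abs_sub_le_iff.2
      ⟨by linarith [(hαW 0).le_hi b hb, (hαW 1).lo_le hb],
        by linarith [(hαW 1).le_hi b hb, (hαW 0).lo_le hb]⟩
  have hαV : IsAlphaBounded G.Lval G.Uval V :=
    IsAlphaBounded.of_tendsto hαW fun b hb => hlim.tendsto_at hb
  exact ⟨V, hαV, fun b hb => G.Hop_eq_of_tendstoUniformlyOn hαV.boundedOnSimplex hW hbW hlim hb⟩

end

end OSPOSG

namespace OSPOSG

variable {S A1 A2 O : Type*} [Fintype S] [Fintype A1] [Fintype A2] [Fintype O]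
  [Nonempty S] [Nonempty A1] [Nonempty A2] [Nonempty O]

/-- The Bellman operator `H` has a unique convex continuous fixpoint `V†` on the simplex;
`V†` is `δ`-Lipschitz (w.r.t. ℓ1) and takes values in `[L, U]`, and value iteration started
from any convex continuous `V₀` with values in `[L, U]` converges uniformly to `V†`. -/
theorem Hop_unique_fixpoint (G : OSPOSG S A1 A2 O) :
    ∃ Vd : (S → ℝ) → ℝ,
      (ConvexOn ℝ (stdSimplex ℝ S) Vd ∧ ContinuousOn Vd (stdSimplex ℝ S) ∧
        (∀ b ∈ stdSimplex ℝ S, G.Hop Vd b = Vd b) ∧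
        LipOnSimplex G.δval Vd ∧
        (∀ b ∈ stdSimplex ℝ S, G.Lval ≤ Vd b ∧ Vd b ≤ G.Uval)) ∧
      (∀ V' : (S → ℝ) → ℝ, ConvexOn ℝ (stdSimplex ℝ S) V' →
        ContinuousOn V' (stdSimplex ℝ S) →
        (∀ b ∈ stdSimplex ℝ S, G.Hop V' b = V' b) →
        ∀ b ∈ stdSimplex ℝ S, V' b = Vd b) ∧
      (∀ V0 : (S → ℝ) → ℝ, ConvexOn ℝ (stdSimplex ℝ S) V0 →
        ContinuousOn V0 (stdSimplex ℝ S) →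
        (∀ b ∈ stdSimplex ℝ S, G.Lval ≤ V0 b ∧ V0 b ≤ G.Uval) →
        ∀ Vseq : ℕ → (S → ℝ) → ℝ, Vseq 0 = V0 → (∀ n : ℕ, Vseq (n + 1) = G.Hop (Vseq n)) →
          TendstoUniformlyOn (fun n => Vseq n) Vd atTop (stdSimplex ℝ S)) := by
  obtain ⟨Vd, hVd, hfix⟩ := G.exists_isAlphaBounded_fixpoint
  refine ⟨Vd, ⟨hVd.convexOn, hVd.continuousOn, hfix, hVd.lipOnSimplex,
    fun b hb => ⟨hVd.lo_le hb, hVd.le_hi b hb⟩⟩, ?_, ?_⟩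
  · intro V' _ hcont hfix' b hb
    obtain ⟨C, hC⟩ := (isCompact_stdSimplex ℝ S).exists_bound_of_continuousOn hcont
    exact tendsto_nhds_unique tendsto_const_nhds
      ((G.tendstoUniformlyOn_iterate hVd.boundedOnSimplex hfix
        (fun _ b hb => (hfix' b hb).symm) ⟨C, hC⟩).tendsto_at hb)
  · intro V0 _ _ hV0 Vseq h0 hstep
    exact G.tendstoUniformlyOn_iterate hVd.boundedOnSimplex hfix (fun n b _ => by rw [hstep])
      (h0 ▸ ⟨_, fun b hb => abs_le_max_abs_abs (hV0 b hb).1 (hV0 b hb).2⟩)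

end OSPOSG
end
end

section
/- Let G be a one-sided POSG and let Γ be a nonempty compact set of linear functions on Δ(S) (identified with their vectors of vertex values in ℝ^S) such that for every α ∈ Γ there exist π1 ∈ Π1 and ᾱ ∈ Γ^{A1×O} with valcomp(π1, ᾱ)(b) ≥ α(b) for all b ∈ Δ(S). Then α(b) ≤ U for every α ∈ Γ and every b ∈ Δ(S). -/
open scoped BigOperators

noncomputable section

namespace OSPOSG

variable {S A1 A2 O : Type*} [Fintype S] [Fintype A1] [Fintype A2] [Fintype O]
  [Nonempty S] [Nonempty A1] [Nonempty A2] [Nonempty O]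

/-- If a nonempty compact set `Γ` of linear functions (identified with their vectors of
vertex values) max-justifies itself — every `α ∈ Γ` is dominated by some value composition
`valcomp(π1, ᾱ)` with `ᾱ ∈ Γ^{A1×O}` — then every `α ∈ Γ` is bounded above by `U`. -/
theorem max_justified_le_U (G : OSPOSG S A1 A2 O) (Γ : Set (S → ℝ))
    (hne : Γ.Nonempty) (hcomp : IsCompact Γ)
    (hjust : ∀ α ∈ Γ, ∃ π1 ∈ stdSimplex ℝ A1, ∃ αb : A1 → O → S → ℝ,
      (∀ a1 o, αb a1 o ∈ Γ) ∧
      ∀ b ∈ stdSimplex ℝ S, lineval α b ≤ G.valcomp π1 αb b) :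
    ∀ α ∈ Γ, ∀ b ∈ stdSimplex ℝ S, lineval α b ≤ G.Uval := by
  classical
  -- f α = max over s of α s
  set f : (S → ℝ) → ℝ := fun α => Finset.univ.sup' Finset.univ_nonempty α with hf
  have hfc : Continuous f := by
    apply Continuous.finset_sup'_apply Finset.univ_nonempty
    intro s _
    exact continuous_apply s
  obtain ⟨αm, hαm, hmax⟩ := hcomp.exists_isMaxOn hne hfc.continuousOn
  set M := f αm with hM
  have hbound : ∀ α ∈ Γ, ∀ s, α s ≤ M := by
    intro α hα s
    exact le_trans (Finset.le_sup' α (Finset.mem_univ s)) (hmax hα)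
  -- M ≤ U
  obtain ⟨π1, hπ1, αb, hαb, hdom⟩ := hjust αm hαm
  obtain ⟨s0, _, hs0⟩ := Finset.exists_mem_eq_sup' (Finset.univ_nonempty (α := S)) αm
  -- indicator belief at s0
  set b0 : S → ℝ := fun s => if s = s0 then 1 else 0 with hb0
  have hb0mem : b0 ∈ stdSimplex ℝ S := by
    constructor
    · intro s; dsimp [b0]; split <;> norm_num
    · simp [b0]
  have hMs : M = αm s0 := hs0
  have hlin : lineval αm b0 = M := by
    rw [hMs]
    simp [lineval, b0, Finset.sum_ite_eq']
  have hval : G.valcomp π1 αb b0 = G.valcompVert π1 αb s0 := by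
    simp [valcomp, b0, Finset.sum_ite_eq']
  have hMval : M ≤ G.valcompVert π1 αb s0 := by
    rw [← hlin, ← hval]; exact hdom b0 hb0mem
  -- bound valcompVert by rmax + γ M
  have hγ1 : (0:ℝ) < 1 - G.γ := by linarith [G.γ_lt_one]
  obtain ⟨a2⟩ := ‹Nonempty A2›
  have hle : G.valcompVert π1 αb s0 ≤ G.rmax + G.γ * M := by
    refine le_trans (Finset.inf'_le _ (Finset.mem_univ a2)) ?_
    have hterm : ∀ a1 ∈ Finset.univ (α := A1),
        π1 a1 * (G.R s0 a1 a2 + G.γ * ∑ o, ∑ s', G.T s0 a1 a2 o s' * αb a1 o s')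
          ≤ π1 a1 * (G.rmax + G.γ * M) := by
      intro a1 _
      apply mul_le_mul_of_nonneg_left _ (hπ1.1 a1)
      have hR : G.R s0 a1 a2 ≤ G.rmax :=
        Finset.le_sup' (fun x : S × A1 × A2 => G.R x.1 x.2.1 x.2.2)
          (Finset.mem_univ (s0, a1, a2))
      have hT : ∑ o, ∑ s', G.T s0 a1 a2 o s' * αb a1 o s' ≤ M := by
        calc ∑ o, ∑ s', G.T s0 a1 a2 o s' * αb a1 o s'
            ≤ ∑ o, ∑ s', G.T s0 a1 a2 o s' * M := by
              refine Finset.sum_le_sum fun o _ => Finset.sum_le_sum fun s' _ => ?_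
              exact mul_le_mul_of_nonneg_left (hbound _ (hαb a1 o) s')
                (G.T_nonneg s0 a1 a2 o s')
          _ = (∑ o, ∑ s', G.T s0 a1 a2 o s') * M := by
              rw [Finset.sum_mul]; congr 1; ext o; rw [Finset.sum_mul]
          _ = M := by rw [G.T_sum]; ring
      have := mul_le_mul_of_nonneg_left hT (le_of_lt G.γ_pos)
      linarith
    calc ∑ a1, π1 a1 * (G.R s0 a1 a2 + G.γ * ∑ o, ∑ s', G.T s0 a1 a2 o s' * αb a1 o s')
        ≤ ∑ a1, π1 a1 * (G.rmax + G.γ * M) := Finset.sum_le_sum hterm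
      _ = (∑ a1, π1 a1) * (G.rmax + G.γ * M) := by rw [Finset.sum_mul]
      _ = G.rmax + G.γ * M := by rw [hπ1.2]; ring
  have hMU : M ≤ G.Uval := by
    have h1 : M ≤ G.rmax + G.γ * M := le_trans hMval hle
    rw [Uval, le_div_iff₀ hγ1]
    nlinarith
  -- conclude
  intro α hα b hb
  calc lineval α b = ∑ s, b s * α s := rfl
    _ ≤ ∑ s, b s * M := Finset.sum_le_sum fun s _ =>
        mul_le_mul_of_nonneg_left (hbound α hα s) (hb.1 s)
    _ = (∑ s, b s) * M := by rw [Finset.sum_mul]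
    _ = M := by rw [hb.2]; ring
    _ ≤ G.Uval := hMU


end OSPOSG
end
end

section
/- Let G be a one-sided POSG and Γ a set of linear functions on Δ(S) such that V(b) = sup_{α ∈ Γ} α(b) is finite for every b ∈ Δ(S), and suppose that for every α ∈ Γ there exist π1 ∈ Π1 and ᾱ ∈ Γ^{A1×O} with valcomp(π1, ᾱ)(b) ≥ α(b) for all b ∈ Δ(S). Then the same holds for Conv(Γ): V(b) = sup_{α ∈ Conv(Γ)} α(b) for every b ∈ Δ(S), and for every α ∈ Conv(Γ) there exist π1 ∈ Π1 and ᾱ ∈ Conv(Γ)^{A1×O} with valcomp(π1, ᾱ)(b) ≥ α(b) for all b ∈ Δ(S). -/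
/-!
Evaluation at a belief is linear in the α-vector, so it maps `Conv(Γ)` onto the convex hull of
the values on `Γ`, which has the same supremum. For max-justification, if `α₁, α₂` are justified
by `(π₁, ᾱ₁)` and `(π₂, ᾱ₂)`, then `a α₁ + b α₂` is justified by `π = a π₁ + b π₂` together with
the continuation `ᾱ(a1)` mixing `ᾱ₁(a1)` and `ᾱ₂(a1)` with weights `a π₁(a1)` and `b π₂(a1)`.
Player 1's payoff against each `a2` is linear in `(π(a1), π(a1) ᾱ(a1))`, so it is the same
mixture of the two payoffs, and the minimum over `a2` of a sum dominates the sum of the minima.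
Hence the justified α-vectors form a convex set containing `Γ`, and so containing `Conv(Γ)`.
-/

open scoped BigOperators

noncomputable section

open Finset

section Lineval

variable {S : Type*} [Fintype S]

theorem isLinearMap_lineval (b : S → ℝ) : IsLinearMap ℝ (lineval · b) :=
  ⟨fun α β => dotProduct_add b α β, fun c α => dotProduct_smul c b α⟩

theorem lineval_single_one [DecidableEq S] (α : S → ℝ) (s : S) :
    lineval α (Pi.single s 1) = α s :=
  single_one_dotProduct s α

theorem lineval_le_lineval_iff {α β : S → ℝ} :
    (∀ b ∈ stdSimplex ℝ S, lineval α b ≤ lineval β b) ↔ α ≤ β := by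
  classical
  constructor
  · intro h s
    simpa only [lineval_single_one] using h _ (single_mem_stdSimplex ℝ s)
  · intro h b hb
    exact sum_le_sum fun s _ => mul_le_mul_of_nonneg_left (h s) (hb.1 s)

end Lineval

/-- Both sides are the junk value `0` when `t` is empty or unbounded above. -/
theorem Real.sSup_convexHull (t : Set ℝ) : sSup (convexHull ℝ t) = sSup t := by
  have hub : upperBounds (convexHull ℝ t) = upperBounds t :=
    (upperBounds_mono_set (subset_convexHull ℝ t)).antisymm
      fun M hM => convexHull_min hM (convex_Iic M)
  rcases t.eq_empty_or_nonempty with rfl | hne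
  · simp
  by_cases hbdd : BddAbove t
  · have hlub : IsLUB (convexHull ℝ t) (sSup t) := by
      unfold IsLUB; rw [hub]; exact isLUB_csSup hne hbdd
    exact hlub.csSup_eq (hne.mono (subset_convexHull ℝ t))
  · rw [Real.sSup_of_not_bddAbove hbdd, Real.sSup_of_not_bddAbove (by rwa [BddAbove, hub])]

theorem sSup_lineval_image_convexHull {S : Type*} [Fintype S] (Γ : Set (S → ℝ)) (b : S → ℝ) :
    sSup ((lineval · b) '' convexHull ℝ Γ) = sSup ((lineval · b) '' Γ) := by
  rw [(isLinearMap_lineval b).image_convexHull, Real.sSup_convexHull]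

theorem exists_mem_segment_smul_add_smul_eq {𝕜 E : Type*} [Field 𝕜] [LinearOrder 𝕜]
    [IsStrictOrderedRing 𝕜] [AddCommGroup E] [Module 𝕜 E] {u v : 𝕜} (hu : 0 ≤ u) (hv : 0 ≤ v)
    (x y : E) : ∃ z ∈ segment 𝕜 x y, (u + v) • z = u • x + v • y := by
  rcases (add_nonneg hu hv).eq_or_lt with h | h
  · obtain ⟨rfl, rfl⟩ : u = 0 ∧ v = 0 := ⟨by linarith, by linarith⟩
    exact ⟨x, left_mem_segment 𝕜 x y, by simp⟩
  · refine ⟨(u / (u + v)) • x + (v / (u + v)) • y,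
      ⟨_, _, div_nonneg hu h.le, div_nonneg hv h.le, by field_simp, rfl⟩, ?_⟩
    rw [smul_add, smul_smul, smul_smul, mul_div_cancel₀ _ h.ne', mul_div_cancel₀ _ h.ne']

namespace OSPOSG

section Payoff

variable {S A1 A2 O : Type*} [Fintype S] [Fintype A1] [Fintype A2] [Fintype O]

def stagePayoff (G : OSPOSG S A1 A2 O) (π1 : A1 → ℝ) (αb : A1 → O → S → ℝ) (s : S) (a2 : A2) :
    ℝ :=
  ∑ a1, π1 a1 * (G.R s a1 a2 + G.γ * ∑ o, ∑ s', G.T s a1 a2 o s' * αb a1 o s')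

theorem stagePayoff_eq (G : OSPOSG S A1 A2 O) (π1 : A1 → ℝ) (αb : A1 → O → S → ℝ) (s : S)
    (a2 : A2) :
    G.stagePayoff π1 αb s a2 = ∑ a1, (π1 a1 * G.R s a1 a2 +
      G.γ * ∑ o, ∑ s', G.T s a1 a2 o s' * (π1 a1 * αb a1 o s')) := by
  refine sum_congr rfl fun a1 _ => ?_
  simp only [mul_add, mul_sum]
  congr 1
  exact sum_congr rfl fun o _ => sum_congr rfl fun s' _ => by ring

theorem stagePayoff_mix (G : OSPOSG S A1 A2 O) {π₁ π₂ : A1 → ℝ} {αb₁ αb₂ αb : A1 → O → S → ℝ}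
    (a b : ℝ) (hαb : ∀ a1 o, (a * π₁ a1 + b * π₂ a1) • αb a1 o =
      (a * π₁ a1) • αb₁ a1 o + (b * π₂ a1) • αb₂ a1 o) (s : S) (a2 : A2) :
    G.stagePayoff (a • π₁ + b • π₂) αb s a2 =
      a * G.stagePayoff π₁ αb₁ s a2 + b * G.stagePayoff π₂ αb₂ s a2 := by
  have hpt : ∀ a1 o s', (a * π₁ a1 + b * π₂ a1) * αb a1 o s' =
      a * (π₁ a1 * αb₁ a1 o s') + b * (π₂ a1 * αb₂ a1 o s') := fun a1 o s' => by
    simpa only [Pi.smul_apply, Pi.add_apply, smul_eq_mul, mul_assoc] using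
      congrFun (hαb a1 o) s'
  simp only [stagePayoff_eq, Pi.add_apply, Pi.smul_apply, smul_eq_mul, hpt, mul_sum,
    ← sum_add_distrib]
  exact sum_congr rfl fun a1 _ => by simp only [mul_add, sum_add_distrib, mul_sum]; ring_nf

variable [Nonempty A2]

theorem valcompVert_eq_inf' (G : OSPOSG S A1 A2 O) (π1 : A1 → ℝ) (αb : A1 → O → S → ℝ)
    (s : S) :
    G.valcompVert π1 αb s = univ.inf' univ_nonempty (G.stagePayoff π1 αb s) :=
  rfl

theorem valcomp_eq_lineval (G : OSPOSG S A1 A2 O) (π1 : A1 → ℝ) (αb : A1 → O → S → ℝ)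
    (b : S → ℝ) : G.valcomp π1 αb b = lineval (G.valcompVert π1 αb) b :=
  rfl

theorem valcompVert_mix (G : OSPOSG S A1 A2 O) {π₁ π₂ : A1 → ℝ} {αb₁ αb₂ αb : A1 → O → S → ℝ}
    {a b : ℝ} (ha : 0 ≤ a) (hb : 0 ≤ b) (hαb : ∀ a1 o, (a * π₁ a1 + b * π₂ a1) • αb a1 o =
      (a * π₁ a1) • αb₁ a1 o + (b * π₂ a1) • αb₂ a1 o) (s : S) :
    a * G.valcompVert π₁ αb₁ s + b * G.valcompVert π₂ αb₂ s ≤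
      G.valcompVert (a • π₁ + b • π₂) αb s := by
  simp only [valcompVert_eq_inf']
  refine le_inf' _ _ fun a2 _ => ?_
  rw [G.stagePayoff_mix a b hαb]
  gcongr <;> exact inf'_le _ (mem_univ a2)

def maxJustified (G : OSPOSG S A1 A2 O) (C : Set (S → ℝ)) : Set (S → ℝ) :=
  {α | ∃ π1 ∈ stdSimplex ℝ A1, ∃ αb : A1 → O → S → ℝ,
    (∀ a1 o, αb a1 o ∈ C) ∧ ∀ b ∈ stdSimplex ℝ S, lineval α b ≤ G.valcomp π1 αb b}

theorem maxJustified_mono (G : OSPOSG S A1 A2 O) {C D : Set (S → ℝ)} (h : C ⊆ D) :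
    G.maxJustified C ⊆ G.maxJustified D := by
  rintro α ⟨π1, hπ1, αb, hαb, hle⟩
  exact ⟨π1, hπ1, αb, fun a1 o => h (hαb a1 o), hle⟩

theorem convex_maxJustified (G : OSPOSG S A1 A2 O) {C : Set (S → ℝ)} (hC : Convex ℝ C) :
    Convex ℝ (G.maxJustified C) := by
  rintro α₁ ⟨π₁, hπ₁, αb₁, hαb₁, hle₁⟩ α₂ ⟨π₂, hπ₂, αb₂, hαb₂, hle₂⟩ a b ha hb hab
  choose αb hαb_mem hαb_eq using fun a1 o =>
    exists_mem_segment_smul_add_smul_eq (mul_nonneg ha (hπ₁.1 a1)) (mul_nonneg hb (hπ₂.1 a1))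
      (αb₁ a1 o) (αb₂ a1 o)
  refine ⟨a • π₁ + b • π₂, convex_stdSimplex ℝ A1 hπ₁ hπ₂ ha hb hab, αb,
    fun a1 o => hC.segment_subset (hαb₁ a1 o) (hαb₂ a1 o) (hαb_mem a1 o), ?_⟩
  simp only [valcomp_eq_lineval, lineval_le_lineval_iff] at hle₁ hle₂ ⊢
  intro s
  calc a * α₁ s + b * α₂ s ≤ a * G.valcompVert π₁ αb₁ s + b * G.valcompVert π₂ αb₂ s := by
        gcongr; exacts [hle₁ s, hle₂ s]
    _ ≤ G.valcompVert (a • π₁ + b • π₂) αb s := G.valcompVert_mix ha hb hαb_eq s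

end Payoff

variable {S A1 A2 O : Type*} [Fintype S] [Fintype A1] [Fintype A2] [Fintype O]
  [Nonempty S] [Nonempty A1] [Nonempty A2] [Nonempty O]

theorem max_justified_convexHull_general (G : OSPOSG S A1 A2 O) (Γ : Set (S → ℝ))
    (V : (S → ℝ) → ℝ)
    (hV : ∀ b ∈ stdSimplex ℝ S, V b = sSup ((fun α => lineval α b) '' Γ))
    (hjust : ∀ α ∈ Γ, ∃ π1 ∈ stdSimplex ℝ A1, ∃ αb : A1 → O → S → ℝ,
      (∀ a1 o, αb a1 o ∈ Γ) ∧
      ∀ b ∈ stdSimplex ℝ S, lineval α b ≤ G.valcomp π1 αb b) :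
    (∀ b ∈ stdSimplex ℝ S,
      V b = sSup ((fun α => lineval α b) '' convexHull ℝ Γ)) ∧
    (∀ α ∈ convexHull ℝ Γ, ∃ π1 ∈ stdSimplex ℝ A1, ∃ αb : A1 → O → S → ℝ,
      (∀ a1 o, αb a1 o ∈ convexHull ℝ Γ) ∧
      ∀ b ∈ stdSimplex ℝ S, lineval α b ≤ G.valcomp π1 αb b) := by
  refine ⟨fun b hb => by rw [hV b hb, sSup_lineval_image_convexHull], fun α hα => ?_⟩
  have hΓ : Γ ⊆ G.maxJustified (convexHull ℝ Γ) := fun α hα =>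
    G.maxJustified_mono (subset_convexHull ℝ Γ) (hjust α hα)
  exact convexHull_min hΓ (G.convex_maxJustified (convex_convexHull ℝ Γ)) hα

/-- If `V` is represented by `Γ` and `V` is max-justified by `Γ`, then `V` is also
represented by and max-justified by `Conv(Γ)`. -/
theorem max_justified_convexHull (G : OSPOSG S A1 A2 O) (Γ : Set (S → ℝ))
    (hne : Γ.Nonempty)
    (hbdd : ∀ b ∈ stdSimplex ℝ S, BddAbove ((fun α => lineval α b) '' Γ))
    (V : (S → ℝ) → ℝ)
    (hV : ∀ b ∈ stdSimplex ℝ S, V b = sSup ((fun α => lineval α b) '' Γ))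
    (hjust : ∀ α ∈ Γ, ∃ π1 ∈ stdSimplex ℝ A1, ∃ αb : A1 → O → S → ℝ,
      (∀ a1 o, αb a1 o ∈ Γ) ∧
      ∀ b ∈ stdSimplex ℝ S, lineval α b ≤ G.valcomp π1 αb b) :
    (∀ b ∈ stdSimplex ℝ S,
      V b = sSup ((fun α => lineval α b) '' convexHull ℝ Γ)) ∧
    (∀ α ∈ convexHull ℝ Γ, ∃ π1 ∈ stdSimplex ℝ A1, ∃ αb : A1 → O → S → ℝ,
      (∀ a1 o, αb a1 o ∈ convexHull ℝ Γ) ∧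
      ∀ b ∈ stdSimplex ℝ S, lineval α b ≤ G.valcomp π1 αb b) :=
  max_justified_convexHull_general G Γ V hV hjust

end OSPOSG
end
end

section
/- Let G be a one-sided POSG and let V be a piecewise linear and convex function on Δ(S), i.e. V(b) = max_{α ∈ Γ₀} α(b) for a finite nonempty set Γ₀ of linear functions on Δ(S). Define HV using Γ = Conv(Γ₀) by [HV](b) = sup_{π1 ∈ Π1} sup_{ᾱ ∈ Γ^{A1×O}} valcomp(π1, ᾱ)(b). Then HV is piecewise linear and convex: there exists a finite nonempty set Γ' of linear functions on Δ(S) such that [HV](b) = max_{α ∈ Γ'} α(b) for every b ∈ Δ(S). -/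
/-!
Write `Γ₀ = {g i}` and let player 1 draw, jointly with his action `a1`, one member `g (φ o)` of
`Γ₀` for every observation `o`. A pair `(π1, ᾱ)` with `ᾱ a1 o ∈ conv Γ₀` is then the same as a
distribution `x` on `A1 × (O → ι)` (take products of the convex weights; conversely take the
marginal of `a1` and the conditional means), and the vertex values of `valcomp(π1, ᾱ)` become
`s ↦ min_{a2} L_{s,a2} x` with every `L_{s,a2}` linear in `x`. For a selection `τ : S → A2`, the
`x` against which `τ` is a best response in every state form a polytope on which
`x ↦ valcomp(π1, ᾱ)(b)` is linear, so its supremum over that polytope is attained at one of its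
finitely many vertices. Hence `Γ'` can be taken to be the vertex values at the vertices of all
these polytopes, independently of `b`.
-/
open scoped BigOperators

noncomputable section

open Set Filter Topology

section Polyhedron

variable {E : Type*} [AddCommGroup E] [Module ℝ E]

theorem mem_openSegment_add_smul_sub (x y : E) {t : ℝ} (ht : 0 < t) :
    x ∈ openSegment ℝ y (x + t • (x - y)) := by
  refine ⟨t / (1 + t), 1 / (1 + t), by positivity, by positivity, by field_simp; ring, ?_⟩
  match_scalars <;> field_simp; ring

theorem exists_pos_add_smul_sub_mem_setOf_forall_le {P : Set ((E →ₗ[ℝ] ℝ) × ℝ)}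
    (hP : P.Finite) {x y : E} (hx : ∀ p ∈ P, p.1 x ≤ p.2)
    (hact : ∀ p ∈ P, p.1 x = p.2 → p.1 y = p.2) :
    ∃ t : ℝ, 0 < t ∧ ∀ p ∈ P, p.1 (x + t • (x - y)) ≤ p.2 := by
  have : ∀ᶠ t in 𝓝[>] (0 : ℝ), ∀ p ∈ P, p.1 (x + t • (x - y)) ≤ p.2 := by
    refine (eventually_all_finite hP).2 fun p hp => ?_
    simp only [map_add, map_smul, map_sub, smul_eq_mul]
    rcases (hx p hp).eq_or_lt with h | h
    · exact .of_forall fun t => by simp [h, hact p hp h]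
    · have hc : Tendsto (fun t : ℝ => p.1 x + t * (p.1 x - p.1 y)) (𝓝 0) (𝓝 (p.1 x)) :=
        (by fun_prop : Continuous fun t : ℝ => p.1 x + t * (p.1 x - p.1 y)).tendsto' 0 _
          (by simp)
      exact nhdsWithin_le_nhds (hc.eventually (eventually_le_nhds h))
  obtain ⟨t, ht, ht0⟩ := (this.and (self_mem_nhdsWithin : ∀ᶠ t in 𝓝[>] (0 : ℝ), 0 < t)).exists
  exact ⟨t, ht0, ht⟩

/-- An extreme point is determined by the set of constraints that are tight at it. -/
theorem finite_extremePoints_setOf_forall_le {P : Set ((E →ₗ[ℝ] ℝ) × ℝ)} (hP : P.Finite) :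
    (extremePoints ℝ {x | ∀ p ∈ P, p.1 x ≤ p.2}).Finite := by
  refine hP.finite_subsets.of_injOn (f := fun x => {p ∈ P | p.1 x = p.2})
    (fun x _ => sep_subset _ _) fun x hx y hy hxy => ?_
  have hact : ∀ p ∈ P, p.1 x = p.2 → p.1 y = p.2 := fun p hp hpx =>
    ((Set.ext_iff.1 hxy p).1 ⟨hp, hpx⟩).2
  obtain ⟨t, ht, hmem⟩ := exists_pos_add_smul_sub_mem_setOf_forall_le hP hx.1 hact
  exact (hx.2 hy.1 hmem (mem_openSegment_add_smul_sub x y ht)).symm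

end Polyhedron

theorem ConvexOn.exists_mem_extremePoints_ge {E : Type*} [AddCommGroup E] [Module ℝ E]
    [TopologicalSpace E] [T2Space E] [IsTopologicalAddGroup E] [ContinuousSMul ℝ E]
    [LocallyConvexSpace ℝ E] {K : Set E} (hK : IsCompact K) (hext : (extremePoints ℝ K).Finite)
    {f : E → ℝ} (hf : ConvexOn ℝ K f) {x : E} (hx : x ∈ K) :
    ∃ v ∈ extremePoints ℝ K, f x ≤ f v := by
  have hK' : convexHull ℝ (extremePoints ℝ K) = K := by
    rw [← (hext.isCompact_convexHull ℝ).isClosed.closure_eq,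
      closure_convexHull_extremePoints hK hf.1]
  exact hf.exists_ge_of_mem_convexHull extremePoints_subset (hK'.symm ▸ hx)

theorem isGreatest_sSup_of_exists_ge {A B : Set ℝ} (hA : A.Finite) (hB : B.Nonempty)
    (hAB : A ⊆ B) (h : ∀ y ∈ B, ∃ z ∈ A, y ≤ z) : IsGreatest A (sSup B) := by
  obtain ⟨y, hy⟩ := hB
  obtain ⟨z, hz, -⟩ := h y hy
  have hmax : IsGreatest A (sSup A) :=
    ⟨Set.Nonempty.csSup_mem ⟨z, hz⟩ hA, fun _ => (le_csSup hA.bddAbove ·)⟩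
  have hmaxB : IsGreatest B (sSup A) := ⟨hAB hmax.1, fun y hy => by
    obtain ⟨z, hz, hyz⟩ := h y hy
    exact hyz.trans (hmax.2 hz)⟩
  rwa [hmaxB.csSup_eq]

theorem convexHull_range_eq_image_stdSimplex {E ι : Type*} [AddCommGroup E] [Module ℝ E]
    [Fintype ι] (g : ι → E) :
    convexHull ℝ (range g) = (fun w => ∑ i, w i • g i) '' stdSimplex ℝ ι := by
  classical
  have h := (Fintype.linearCombination ℝ g).image_convexHull
    (range fun i j => if i = j then (1 : ℝ) else 0)
  rw [convexHull_basis_eq_stdSimplex, ← range_comp] at h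
  convert h.symm using 3
  · ext i
    simp [Fintype.linearCombination_apply]
  · simp [Fintype.linearCombination_apply]

theorem sum_prod_mul_eval {R O ι : Type*} [CommSemiring R] [Fintype O] [DecidableEq O]
    [Fintype ι] {w : O → ι → R} (hw : ∀ o, ∑ i, w o i = 1) (F : ι → R) (o₀ : O) :
    ∑ φ : O → ι, (∏ o, w o (φ o)) * F (φ o₀) = ∑ i, w o₀ i * F i := by
  calc ∑ φ : O → ι, (∏ o, w o (φ o)) * F (φ o₀)
      = ∑ φ : O → ι, ∏ o, w o (φ o) * (if o = o₀ then F (φ o) else 1) := by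
        refine Finset.sum_congr rfl fun φ _ => ?_
        rw [Finset.prod_mul_distrib, Finset.prod_ite_eq']
        simp
    _ = ∏ o, ∑ i, w o i * (if o = o₀ then F i else 1) :=
        (Fintype.prod_sum fun o i => w o i * if o = o₀ then F i else 1).symm
    _ = ∑ i, w o₀ i * F i := by
        rw [Finset.prod_eq_single o₀ (fun o _ ho => by simp [ho, hw]) (by simp)]
        simp

namespace OSPOSG

variable {S A1 A2 O ι : Type*} [Fintype S] [Fintype A1] [Fintype A2] [Fintype O] [Fintype ι]
  [DecidableEq O] (G : OSPOSG S A1 A2 O) (g : ι → S → ℝ)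

/-- A pure choice `e = (a1, φ)` of player 1 is an action together with a member `g (φ o)` of the
family `g` for each observation `o`. A distribution `x` over pure choices stands for the stage
strategy `π1 a1 = ∑ φ, x (a1, φ)` and the vectors `π1 a1 • ᾱ a1 o = ∑ φ, x (a1, φ) • g (φ o)`. -/
def pureValue (s : S) (a2 : A2) (e : A1 × (O → ι)) : ℝ :=
  G.R s e.1 a2 + G.γ * ∑ o, ∑ s', G.T s e.1 a2 o s' * g (e.2 o) s'

def mixedValue (s : S) (a2 : A2) : (A1 × (O → ι) → ℝ) →ₗ[ℝ] ℝ :=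
  Fintype.linearCombination ℝ (G.pureValue g s a2)

def vertexValue [Nonempty A2] (x : A1 × (O → ι) → ℝ) (s : S) : ℝ :=
  Finset.univ.inf' Finset.univ_nonempty fun a2 => G.mixedValue g s a2 x

theorem mixedValue_eq_of_moments {π1 : A1 → ℝ} {αb : A1 → O → S → ℝ} {x : A1 × (O → ι) → ℝ}
    (hmarg : ∀ a1, ∑ φ : O → ι, x (a1, φ) = π1 a1)
    (hmom : ∀ a1 o s', ∑ φ : O → ι, x (a1, φ) * g (φ o) s' = π1 a1 * αb a1 o s')
    (s : S) (a2 : A2) :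
    G.mixedValue g s a2 x =
      ∑ a1, π1 a1 * (G.R s a1 a2 + G.γ * ∑ o, ∑ s', G.T s a1 a2 o s' * αb a1 o s') := by
  rw [mixedValue, Fintype.linearCombination_apply, Fintype.sum_prod_type]
  refine Finset.sum_congr rfl fun a1 _ => ?_
  calc ∑ φ : O → ι, x (a1, φ) • G.pureValue g s a2 (a1, φ)
      = (∑ φ : O → ι, x (a1, φ)) * G.R s a1 a2 + G.γ * ∑ o, ∑ s', G.T s a1 a2 o s' *
          ∑ φ : O → ι, x (a1, φ) * g (φ o) s' := by
        simp only [pureValue, smul_eq_mul, mul_add, Finset.sum_add_distrib, Finset.mul_sum,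
          Finset.sum_mul]
        rw [Finset.sum_comm]
        refine congrArg _ (Finset.sum_congr rfl fun o _ => ?_)
        rw [Finset.sum_comm]
        exact Finset.sum_congr rfl fun s' _ => Finset.sum_congr rfl fun φ _ => by ring
    _ = _ := by simp only [hmarg, hmom, mul_add, Finset.mul_sum, mul_left_comm]

theorem valcompVert_eq_vertexValue_of_moments [Nonempty A2] {π1 : A1 → ℝ} {αb : A1 → O → S → ℝ}
    {x : A1 × (O → ι) → ℝ} (hmarg : ∀ a1, ∑ φ : O → ι, x (a1, φ) = π1 a1)
    (hmom : ∀ a1 o s', ∑ φ : O → ι, x (a1, φ) * g (φ o) s' = π1 a1 * αb a1 o s') :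
    G.valcompVert π1 αb = G.vertexValue g x :=
  funext fun s => Finset.inf'_congr _ rfl fun a2 _ =>
    (G.mixedValue_eq_of_moments g hmarg hmom s a2).symm

theorem exists_vertexValue_eq_valcompVert [Nonempty A2] {π1 : A1 → ℝ}
    (hπ1 : π1 ∈ stdSimplex ℝ A1) {αb : A1 → O → S → ℝ}
    (hαb : ∀ a1 o, αb a1 o ∈ convexHull ℝ (range g)) :
    ∃ x ∈ stdSimplex ℝ (A1 × (O → ι)), G.vertexValue g x = G.valcompVert π1 αb := by
  simp only [convexHull_range_eq_image_stdSimplex] at hαb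
  choose w hw hwg using hαb
  have hmarg : ∀ a1, ∑ φ : O → ι, π1 a1 * ∏ o, w a1 o (φ o) = π1 a1 := fun a1 => by
    rw [← Finset.mul_sum, ← Fintype.prod_sum, Finset.prod_eq_one fun o _ => (hw a1 o).2,
      mul_one]
  refine ⟨fun e => π1 e.1 * ∏ o, w e.1 o (e.2 o),
    ⟨fun e => mul_nonneg (hπ1.1 _) (Finset.prod_nonneg fun o _ => (hw _ o).1 _), ?_⟩,
    (G.valcompVert_eq_vertexValue_of_moments g hmarg fun a1 o s' => ?_).symm⟩
  · rw [Fintype.sum_prod_type]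
    simp only [hmarg]
    exact hπ1.2
  · simp only [mul_assoc, ← Finset.mul_sum, ← hwg a1 o, Finset.sum_apply, Pi.smul_apply,
      smul_eq_mul]
    rw [sum_prod_mul_eval (fun o => (hw a1 o).2) (fun i => g i s') o]

theorem exists_valcompVert_eq_vertexValue [Nonempty A2] [Nonempty ι] {x : A1 × (O → ι) → ℝ}
    (hx : x ∈ stdSimplex ℝ (A1 × (O → ι))) :
    ∃ π1 ∈ stdSimplex ℝ A1, ∃ αb : A1 → O → S → ℝ,
      (∀ a1 o, αb a1 o ∈ convexHull ℝ (range g)) ∧ G.valcompVert π1 αb = G.vertexValue g x := by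
  classical
  let π1 a1 := ∑ φ : O → ι, x (a1, φ)
  let αb a1 o := if π1 a1 = 0 then g (Classical.arbitrary ι)
    else Finset.univ.centerMass (fun φ => x (a1, φ)) fun φ => g (φ o)
  refine ⟨π1, ⟨fun a1 => Finset.sum_nonneg fun φ _ => hx.1 _, ?_⟩, αb, fun a1 o => ?_,
    G.valcompVert_eq_vertexValue_of_moments g (fun _ => rfl) fun a1 o s' => ?_⟩
  · rw [← hx.2, Fintype.sum_prod_type]
  · dsimp only [αb]
    split_ifs with h
    · exact subset_convexHull ℝ _ (mem_range_self _)
    · exact Finset.centerMass_mem_convexHull _ (fun φ _ => hx.1 _)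
        ((Finset.sum_nonneg fun φ _ => hx.1 _).lt_of_ne' h) fun φ _ => mem_range_self _
  · dsimp only [αb]
    split_ifs with h
    · rw [h, zero_mul]
      exact Finset.sum_eq_zero fun φ _ => by
        rw [(Finset.sum_eq_zero_iff_of_nonneg fun ψ _ => hx.1 (a1, ψ)).1 h φ
          (Finset.mem_univ _), zero_mul]
    · rw [Finset.centerMass, Pi.smul_apply, smul_eq_mul, ← mul_assoc, mul_inv_cancel₀ h,
        one_mul, Finset.sum_apply]
      rfl

def bestResponseCell (τ : S → A2) : Set (A1 × (O → ι) → ℝ) :=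
  stdSimplex ℝ _ ∩ {x | ∀ s a2, G.mixedValue g s (τ s) x ≤ G.mixedValue g s a2 x}

theorem exists_mem_bestResponseCell [Nonempty A2] {x : A1 × (O → ι) → ℝ}
    (hx : x ∈ stdSimplex ℝ (A1 × (O → ι))) : ∃ τ, x ∈ G.bestResponseCell g τ := by
  choose τ _ hτ using fun s => Finset.exists_min_image Finset.univ
    (fun a2 => G.mixedValue g s a2 x) Finset.univ_nonempty
  exact ⟨τ, hx, fun s a2 => hτ s a2 (Finset.mem_univ _)⟩

theorem vertexValue_of_mem_bestResponseCell [Nonempty A2] {τ : S → A2} {x : A1 × (O → ι) → ℝ}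
    (hx : x ∈ G.bestResponseCell g τ) (s : S) : G.vertexValue g x s = G.mixedValue g s (τ s) x :=
  le_antisymm (Finset.inf'_le _ (Finset.mem_univ _)) (Finset.le_inf' _ _ fun a2 _ => hx.2 s a2)

theorem isCompact_bestResponseCell (τ : S → A2) : IsCompact (G.bestResponseCell g τ) := by
  refine (isCompact_stdSimplex ℝ _).inter_right ?_
  simp only [ofPred_forall]
  exact isClosed_iInter fun s => isClosed_iInter fun a2 =>
    isClosed_le (LinearMap.continuous_of_finiteDimensional _)
      (LinearMap.continuous_of_finiteDimensional _)

theorem convex_bestResponseCell (τ : S → A2) : Convex ℝ (G.bestResponseCell g τ) := by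
  refine (convex_stdSimplex ℝ _).inter ?_
  simp only [ofPred_forall]
  exact convex_iInter fun s => convex_iInter fun a2 => by
    simpa only [LinearMap.sub_apply, sub_nonpos] using
      convex_halfSpace_le (G.mixedValue g s (τ s) - G.mixedValue g s a2).isLinear 0

theorem finite_extremePoints_bestResponseCell (τ : S → A2) :
    (extremePoints ℝ (G.bestResponseCell g τ)).Finite := by
  let total : (A1 × (O → ι) → ℝ) →ₗ[ℝ] ℝ := Fintype.linearCombination ℝ fun _ => 1
  let P : Set (((A1 × (O → ι) → ℝ) →ₗ[ℝ] ℝ) × ℝ) :=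
    range (fun e => (-LinearMap.proj e, 0)) ∪ {(total, 1), (-total, -1)} ∪
      range fun q : S × A2 => (G.mixedValue g q.1 (τ q.1) - G.mixedValue g q.1 q.2, 0)
  have hP : P.Finite := ((finite_range _).union (toFinite _)).union (finite_range _)
  have hpoly : G.bestResponseCell g τ = {x | ∀ p ∈ P, p.1 x ≤ p.2} := by
    ext x
    simp only [bestResponseCell, stdSimplex, P, mem_inter_iff, mem_ofPred_eq, mem_union, or_imp,
      forall_and, forall_mem_range, forall_mem_insert, mem_singleton_iff, forall_eq, Prod.forall,
      LinearMap.neg_apply, LinearMap.proj_apply, LinearMap.sub_apply, neg_nonpos, sub_nonpos,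
      neg_le_neg_iff, total, Fintype.linearCombination_apply, smul_eq_mul, mul_one,
      ← le_antisymm_iff]
  rw [hpoly]
  exact finite_extremePoints_setOf_forall_le hP

theorem exists_mem_extremePoints_bestResponseCell_ge [Nonempty A2] (b : S → ℝ)
    {x : A1 × (O → ι) → ℝ} (hx : x ∈ stdSimplex ℝ (A1 × (O → ι))) :
    ∃ τ, ∃ v ∈ extremePoints ℝ (G.bestResponseCell g τ),
      lineval (G.vertexValue g x) b ≤ lineval (G.vertexValue g v) b := by
  obtain ⟨τ, hxτ⟩ := G.exists_mem_bestResponseCell g hx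
  let ℓ : (A1 × (O → ι) → ℝ) →ₗ[ℝ] ℝ := ∑ s, b s • G.mixedValue g s (τ s)
  have hℓ : ∀ y ∈ G.bestResponseCell g τ, lineval (G.vertexValue g y) b = ℓ y := fun y hy => by
    simp [ℓ, lineval, G.vertexValue_of_mem_bestResponseCell g hy, LinearMap.sum_apply]
  obtain ⟨v, hv, hle⟩ := (ℓ.convexOn (G.convex_bestResponseCell g τ)).exists_mem_extremePoints_ge
    (G.isCompact_bestResponseCell g τ) (G.finite_extremePoints_bestResponseCell g τ) hxτ
  exact ⟨τ, v, hv, by rwa [hℓ x hxτ, hℓ v (extremePoints_subset hv)]⟩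

end OSPOSG

namespace OSPOSG

variable {S A1 A2 O : Type*} [Fintype S] [Fintype A1] [Fintype A2] [Fintype O]
  [Nonempty S] [Nonempty A1] [Nonempty A2] [Nonempty O]

/-- If `V` is piecewise linear and convex (a pointwise maximum of a finite nonempty set `Γ₀`
of linear functions), then so is `HV`: there is a finite nonempty set `Γ'` of linear
functions whose pointwise maximum is `HV` at each belief. -/
theorem maxComposition_pwlc (G : OSPOSG S A1 A2 O) (Γ₀ : Set (S → ℝ))
    (hfin : Γ₀.Finite) (hne : Γ₀.Nonempty) :
    ∃ Γ' : Set (S → ℝ), Γ'.Finite ∧ Γ'.Nonempty ∧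
      ∀ b ∈ stdSimplex ℝ S,
        IsGreatest ((fun α => lineval α b) '' Γ')
          (sSup {y : ℝ | ∃ π1 ∈ stdSimplex ℝ A1, ∃ αb : A1 → O → S → ℝ,
            (∀ a1 o, αb a1 o ∈ convexHull ℝ Γ₀) ∧ y = G.valcomp π1 αb b}) := by
  classical
  have := hfin.fintype
  have := hne.to_subtype
  let g : Γ₀ → S → ℝ := Subtype.val
  have hg : range g = Γ₀ := Subtype.range_coe
  let V := ⋃ τ : S → A2, extremePoints ℝ (G.bestResponseCell g τ)
  have hVfin : V.Finite := finite_iUnion fun τ => G.finite_extremePoints_bestResponseCell g τ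
  have hV : V ⊆ stdSimplex ℝ _ :=
    iUnion_subset fun τ => extremePoints_subset.trans inter_subset_left
  obtain ⟨x₀, hx₀⟩ : (stdSimplex ℝ (A1 × (O → Γ₀))).Nonempty :=
    ⟨_, ite_eq_mem_stdSimplex ℝ (Classical.arbitrary _)⟩
  have hmax : ∀ b : S → ℝ, IsGreatest ((fun α => lineval α b) '' (G.vertexValue g '' V))
      (sSup {y : ℝ | ∃ π1 ∈ stdSimplex ℝ A1, ∃ αb : A1 → O → S → ℝ,
        (∀ a1 o, αb a1 o ∈ convexHull ℝ Γ₀) ∧ y = G.valcomp π1 αb b}) := by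
    intro b
    refine isGreatest_sSup_of_exists_ge ((hVfin.image _).image _) ?_ ?_ ?_
    · obtain ⟨π1, hπ1, αb, hαb, -⟩ := G.exists_valcompVert_eq_vertexValue g hx₀
      exact ⟨_, π1, hπ1, αb, hg ▸ hαb, rfl⟩
    · rintro _ ⟨_, ⟨v, hv, rfl⟩, rfl⟩
      obtain ⟨π1, hπ1, αb, hαb, h⟩ := G.exists_valcompVert_eq_vertexValue g (hV hv)
      exact ⟨π1, hπ1, αb, hg ▸ hαb, by rw [← h]; rfl⟩
    · rintro _ ⟨π1, hπ1, αb, hαb, rfl⟩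
      obtain ⟨x, hx, hxv⟩ := G.exists_vertexValue_eq_valcompVert g hπ1 (hg.symm ▸ hαb)
      obtain ⟨τ, v, hv, hle⟩ := G.exists_mem_extremePoints_bestResponseCell_ge g b hx
      exact ⟨_, ⟨_, ⟨v, mem_iUnion.2 ⟨τ, hv⟩, rfl⟩, rfl⟩, by rw [hxv] at hle; exact hle⟩
  exact ⟨_, hVfin.image _, (hmax 0).nonempty.of_image, fun b _ => hmax b⟩

end OSPOSG
end
end

section
/- Let γ ∈ (0,1), δ > 0, ε > 0, and let D be a real number with 0 < D < (1−γ)ε/(2δ). Define the sequence ρ : ℕ → ℝ by ρ(0) = ε and ρ(t+1) = (ρ(t) − 2δD)/γ. Then ρ is strictly increasing and unbounded, i.e. ρ(t) < ρ(t+1) for all t and ρ(t) → ∞ as t → ∞. -/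
/-!
The recursion `ρ(t+1) = (ρ(t) - c)/γ` with `c = 2δD` has the fixed point `p = c/(1-γ)`, and
`ρ(t) - p` is multiplied by `γ⁻¹ > 1` at every step, so `ρ(t) = p + (ε - p) γ⁻ᵗ`. The bound on `D`
says exactly that `p < ε`, so this is a positive multiple of a diverging geometric sequence,
shifted by a constant.
-/

open Filter

theorem eq_add_mul_inv_pow_of_succ_eq_sub_div {K : Type*} [Field K] {γ c : K} (hγ0 : γ ≠ 0)
    (hγ1 : γ ≠ 1) {u : ℕ → K} (hu : ∀ t, u (t + 1) = (u t - c) / γ) (t : ℕ) :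
    u t = c / (1 - γ) + (u 0 - c / (1 - γ)) * γ⁻¹ ^ t := by
  have h1γ : 1 - γ ≠ 0 := sub_ne_zero.mpr (Ne.symm hγ1)
  induction t with
  | zero => simp
  | succ t ih =>
    rw [hu t, ih, pow_succ]
    field_simp
    ring

theorem strictMono_const_add_mul_pow {p K r : ℝ} (hK : 0 < K) (hr : 1 < r) :
    StrictMono fun t : ℕ => p + K * r ^ t :=
  fun _ _ hst => add_lt_add_right (mul_lt_mul_of_pos_left (pow_lt_pow_right₀ hr hst) hK) p

theorem tendsto_const_add_mul_pow_atTop {p K r : ℝ} (hK : 0 < K) (hr : 1 < r) :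
    Tendsto (fun t : ℕ => p + K * r ^ t) atTop atTop :=
  tendsto_atTop_add_const_left _ p <|
    (tendsto_pow_atTop_atTop_of_one_lt hr).const_mul_atTop hK

theorem div_one_sub_lt_of_lt_div {γ δ ε D : ℝ} (hγ1 : γ < 1) (hδ : 0 < δ)
    (hD : D < (1 - γ) * ε / (2 * δ)) : 2 * δ * D / (1 - γ) < ε := by
  rw [lt_div_iff₀ (by positivity)] at hD
  rw [div_lt_iff₀ (by linarith)]
  linarith

theorem rho_strict_mono_unbounded_general (γ δ ε D : ℝ) (hγ0 : 0 < γ) (hγ1 : γ < 1)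
    (hδ : 0 < δ) (hD1 : D < (1 - γ) * ε / (2 * δ))
    (ρ : ℕ → ℝ) (hρ0 : ρ 0 = ε) (hρ : ∀ t : ℕ, ρ (t + 1) = (ρ t - 2 * δ * D) / γ) :
    (∀ t : ℕ, ρ t < ρ (t + 1)) ∧ Filter.Tendsto ρ Filter.atTop Filter.atTop := by
  set p := 2 * δ * D / (1 - γ)
  have hclosed : ρ = fun t => p + (ε - p) * γ⁻¹ ^ t := by
    funext t
    rw [eq_add_mul_inv_pow_of_succ_eq_sub_div hγ0.ne' hγ1.ne hρ t, hρ0]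
  have hK : 0 < ε - p := sub_pos.mpr (div_one_sub_lt_of_lt_div hγ1 hδ hD1)
  have hr : 1 < γ⁻¹ := one_lt_inv₀ hγ0 |>.mpr hγ1
  rw [hclosed]
  exact ⟨fun t => strictMono_const_add_mul_pow hK hr t.lt_succ_self,
    tendsto_const_add_mul_pow_atTop hK hr⟩

/-- The sequence `ρ(0) = ε`, `ρ(t+1) = (ρ(t) - 2δD)/γ` of required approximation gaps of
the HSVI algorithm is strictly increasing and unbounded whenever
`0 < D < (1-γ)ε/(2δ)`. -/
theorem rho_strict_mono_unbounded (γ δ ε D : ℝ) (hγ0 : 0 < γ) (hγ1 : γ < 1)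
    (hδ : 0 < δ) (hε : 0 < ε) (hD0 : 0 < D) (hD1 : D < (1 - γ) * ε / (2 * δ))
    (ρ : ℕ → ℝ) (hρ0 : ρ 0 = ε) (hρ : ∀ t : ℕ, ρ (t + 1) = (ρ t - 2 * δ * D) / γ) :
    (∀ t : ℕ, ρ t < ρ (t + 1)) ∧ Filter.Tendsto ρ Filter.atTop Filter.atTop :=
  rho_strict_mono_unbounded_general γ δ ε D hγ0 hγ1 hδ hD1 ρ hρ0 hρ
end
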